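/- arXiv:2303.07743 — 9 statements merged into one kernel-verified Lean document; each statement's English description precedes it below -/
import Mathlib

section
/- Let μ be a finite Borel measure on ℝ with μ((−∞,0]) = 0, and let π : ℝ → [0,∞) be Lebesgue-integrable with π = 0 on (−∞,0] and π(x) > 0 for all x > 0. Define φ(x) := −(1/π(x)) ∫_0^x μ((x−z,∞)) π(z) dz for x > 0. Then for every smooth compactly supported function f : ℝ → ℝ with supp f ⊂ (0,∞), one has ∫_0^∞ ( φ(x) f'(x) + ∫_ℝ (f(x+z) − f(x)) dμ(z) ) π(x) dx = 0. -/
open MeasureTheory Set Filter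

/-- Auxiliary: representation of the jump part of the generator as an integral
against the tail function of `μ`. -/
lemma aux_jump_repr (μ : Measure ℝ) [IsFiniteMeasure μ] (hμ : μ (Iic 0) = 0)
    (f : ℝ → ℝ) (hf : ContDiff ℝ (⊤ : ℕ∞) f) (hf_supp : HasCompactSupport f) (x : ℝ) :
    ∫ z, (f (x + z) - f x) ∂μ
      = ∫ y, (Ioi x).indicator (fun y => deriv f y * (μ (Ioi (y - x))).toReal) y := by
  have hf' : Continuous (deriv f) := hf.continuous_deriv (by simp)
  have hd : ∀ y, DifferentiableAt ℝ f y := fun y => (hf.differentiable (by simp)) y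
  set S : Set (ℝ × ℝ) := {p : ℝ × ℝ | x < p.2 ∧ p.2 < x + p.1} with hS_def
  have hS : MeasurableSet S := by
    apply MeasurableSet.inter
    · exact measurableSet_lt measurable_const measurable_snd
    · exact measurableSet_lt measurable_snd (measurable_const.add measurable_fst)
  set K : ℝ × ℝ → ℝ := S.indicator (fun p => deriv f p.2) with hK_def
  have hK_meas : StronglyMeasurable K :=
    ((hf'.comp continuous_snd).stronglyMeasurable).indicator hS
  obtain ⟨C, hC⟩ := (hf_supp.deriv).exists_bound_of_continuous hf'
  -- the dominating function
  have hD_int : Integrable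
      (fun p : ℝ × ℝ => (tsupport (deriv f)).indicator (fun _ => C) p.2)
      (μ.prod volume) := by
    have h1 : Integrable ((tsupport (deriv f)).indicator (fun _ => C)) volume := by
      rw [integrable_indicator_iff (isClosed_tsupport _).measurableSet]
      exact integrableOn_const (hf_supp.deriv.isCompact.measure_lt_top.ne)
    have := (integrable_const (μ := μ) (1 : ℝ)).mul_prod h1
    simpa using this
  have hK_int : Integrable K (μ.prod volume) := by
    apply Integrable.mono' hD_int hK_meas.aestronglyMeasurable
    refine Eventually.of_forall fun p => ?_
    by_cases hp : p.2 ∈ tsupport (deriv f)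
    · calc ‖K p‖ ≤ ‖deriv f p.2‖ := norm_indicator_le_norm_self _ _
        _ ≤ C := hC p.2
        _ = (tsupport (deriv f)).indicator (fun _ => C) p.2 := by
            rw [indicator_of_mem hp]
    · have h0 : deriv f p.2 = 0 := image_eq_zero_of_notMem_tsupport hp
      calc ‖K p‖ ≤ ‖deriv f p.2‖ := norm_indicator_le_norm_self _ _
        _ = 0 := by rw [h0, norm_zero]
        _ ≤ _ := by rw [indicator_of_notMem hp]
  -- rewrite the integrand μ-a.e. using the FTC
  have hae : ∀ᵐ z ∂μ, 0 < z := by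
    rw [ae_iff]
    convert hμ using 2
    ext z; simp [not_lt]
  have hcongr : ∀ᵐ z ∂μ, f (x + z) - f x = ∫ y, K (z, y) := by
    filter_upwards [hae] with z hz
    have h1 : ∫ y in x..(x + z), deriv f y = f (x + z) - f x :=
      intervalIntegral.integral_deriv_eq_sub (fun y _ => hd y)
        (hf'.intervalIntegrable _ _)
    have h2 : ∫ y in x..(x + z), deriv f y = ∫ y in Ioc x (x + z), deriv f y :=
      intervalIntegral.integral_of_le (by linarith)
    have h3 : ∫ y in Ioc x (x + z), deriv f y = ∫ y in Ioo x (x + z), deriv f y :=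
      integral_Ioc_eq_integral_Ioo
    have h4 : ∫ y in Ioo x (x + z), deriv f y
        = ∫ y, (Ioo x (x + z)).indicator (deriv f) y :=
      (integral_indicator measurableSet_Ioo).symm
    have h5 : ∀ y, (Ioo x (x + z)).indicator (deriv f) y = K (z, y) := by
      intro y
      simp only [hK_def, indicator, hS_def, mem_Ioo, mem_setOf_eq]
    rw [← h1, h2, h3, h4]
    exact integral_congr_ae (Eventually.of_forall h5)
  rw [integral_congr_ae hcongr]
  rw [integral_integral_swap (f := fun z y => K (z, y)) hK_int]
  refine integral_congr_ae (Eventually.of_forall fun y => ?_)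
  show (∫ z, K (z, y) ∂μ)
      = (Ioi x).indicator (fun y => deriv f y * (μ (Ioi (y - x))).toReal) y
  by_cases hy : x < y
  · have h6 : ∀ z, K (z, y) = (Ioi (y - x)).indicator (fun _ => deriv f y) z := by
      intro z
      simp only [hK_def, indicator, hS_def, mem_setOf_eq, mem_Ioi, hy, true_and,
        sub_lt_iff_lt_add']
    rw [integral_congr_ae (Eventually.of_forall h6),
      integral_indicator_const _ measurableSet_Ioi,
      indicator_of_mem (show y ∈ Ioi x from hy)]
    simp [mul_comm, Measure.real]
  · have h6 : ∀ z, K (z, y) = 0 := by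
      intro z
      apply indicator_of_notMem
      simp only [hS_def, mem_setOf_eq, not_and]
      intro h; exact absurd h hy
    rw [integral_congr_ae (Eventually.of_forall h6),
      indicator_of_notMem (show y ∉ Ioi x from hy), integral_zero]

/-- infinitesimal invariance of the target density `π` for the generator
of the SDE driven by a spectrally positive compound Poisson process with jump measure `μ`. -/
theorem levy_langevin_infinitesimally_invariant_halfline
    (μ : Measure ℝ) [IsFiniteMeasure μ] (hμ : μ (Iic 0) = 0)
    (π : ℝ → ℝ) (hπ_int : Integrable π) (hπ_nonneg : ∀ x, 0 ≤ π x)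
    (hπ_zero : ∀ x ≤ 0, π x = 0) (hπ_pos : ∀ x > 0, 0 < π x)
    (φ : ℝ → ℝ)
    (hφ : ∀ x > 0,
      φ x = -(1 / π x) * ∫ z in Ioo 0 x, (μ (Ioi (x - z))).toReal * π z)
    (f : ℝ → ℝ) (hf : ContDiff ℝ (⊤ : ℕ∞) f) (hf_supp : HasCompactSupport f)
    (hf_supp' : tsupport f ⊆ Ioi 0) :
    ∫ x in Ioi 0, (φ x * deriv f x + ∫ z, (f (x + z) - f x) ∂μ) * π x = 0 := by
  have hf_cont : Continuous f := hf.continuous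
  have hf' : Continuous (deriv f) := hf.continuous_deriv (by simp)
  have hf'_supp : HasCompactSupport (deriv f) := hf_supp.deriv
  have hf'_int : Integrable (deriv f) := hf'.integrable_of_hasCompactSupport hf'_supp
  obtain ⟨Cf, hCf⟩ := hf_supp.exists_bound_of_continuous hf_cont
  have hCf0 : 0 ≤ Cf := le_trans (norm_nonneg (f 0)) (hCf 0)
  set M : ℝ := (μ univ).toReal with hM_def
  have hM0 : 0 ≤ M := ENNReal.toReal_nonneg
  set g : ℝ → ℝ := fun t => (μ (Ioi t)).toReal with hg_def
  have hg_meas : Measurable g := by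
    apply Measurable.ennreal_toReal
    exact Antitone.measurable fun s t hst => measure_mono (Ioi_subset_Ioi hst)
  have hg_nonneg : ∀ t, 0 ≤ g t := fun t => ENNReal.toReal_nonneg
  have hg_le : ∀ t, g t ≤ M :=
    fun t => ENNReal.toReal_mono (measure_ne_top μ _) (measure_mono (subset_univ _))
  set F : ℝ → ℝ := fun x => ∫ z in Ioo 0 x, g (x - z) * π z with hF_def
  set J : ℝ → ℝ := fun x => ∫ z, (f (x + z) - f x) ∂μ with hJ_def
  have hJ_eq : ∀ x, J x
      = ∫ y, (Ioi x).indicator (fun y => deriv f y * g (y - x)) y :=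
    fun x => aux_jump_repr μ hμ f hf hf_supp x
  -- bound on J
  have hJ_bound : ∀ x, ‖J x‖ ≤ M * (2 * Cf) := by
    intro x
    calc ‖J x‖ ≤ ∫ z, ‖f (x + z) - f x‖ ∂μ := norm_integral_le_integral_norm _
      _ ≤ ∫ _z, 2 * Cf ∂μ := by
          apply integral_mono_of_nonneg (Eventually.of_forall fun z => norm_nonneg _)
            (integrable_const _)
          refine Eventually.of_forall fun z => ?_
          calc ‖f (x + z) - f x‖ ≤ ‖f (x + z)‖ + ‖f x‖ := norm_sub_le _ _
            _ ≤ Cf + Cf := add_le_add (hCf _) (hCf _)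
            _ = 2 * Cf := by ring
      _ = M * (2 * Cf) := by simp [hM_def, smul_eq_mul, Measure.real]
  -- bound on F
  set Cπ : ℝ := ∫ z, ‖π z‖ with hCπ_def
  have hF_bound : ∀ x, ‖F x‖ ≤ M * Cπ := by
    intro x
    calc ‖F x‖ ≤ ∫ z in Ioo 0 x, ‖g (x - z) * π z‖ := norm_integral_le_integral_norm _
      _ ≤ ∫ z in Ioo 0 x, M * ‖π z‖ := by
          apply integral_mono_of_nonneg (Eventually.of_forall fun z => norm_nonneg _)
            ((hπ_int.norm.const_mul M).restrict)
          refine Eventually.of_forall fun z => ?_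
          show ‖g (x - z) * π z‖ ≤ M * ‖π z‖
          rw [norm_mul]
          apply mul_le_mul_of_nonneg_right _ (norm_nonneg _)
          rw [Real.norm_of_nonneg (hg_nonneg _)]
          exact hg_le _
      _ ≤ ∫ z, M * ‖π z‖ :=
          setIntegral_le_integral (hπ_int.norm.const_mul M)
            (Eventually.of_forall fun z => by positivity)
      _ = M * Cπ := integral_const_mul M _
  -- measurability of F
  set W : ℝ × ℝ → ℝ :=
    {p : ℝ × ℝ | 0 < p.2 ∧ p.2 < p.1}.indicator (fun p => g (p.1 - p.2) * π p.2)
    with hW_def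
  have hWset : MeasurableSet {p : ℝ × ℝ | 0 < p.2 ∧ p.2 < p.1} :=
    (measurableSet_lt measurable_const measurable_snd).inter
      (measurableSet_lt measurable_snd measurable_fst)
  have hW_meas : AEStronglyMeasurable W (volume.prod volume) := by
    apply AEStronglyMeasurable.indicator _ hWset
    exact ((hg_meas.comp (measurable_fst.sub measurable_snd)).aestronglyMeasurable).mul
      hπ_int.1.comp_snd
  have hF_eqW : ∀ x, F x = ∫ z, W (x, z) := by
    intro x
    rw [hF_def]
    simp only
    rw [← integral_indicator measurableSet_Ioo]
    refine integral_congr_ae (Eventually.of_forall fun z => ?_)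
    simp only [hW_def, indicator, mem_Ioo, mem_setOf_eq]
  have hF_meas : AEStronglyMeasurable F volume := by
    have := hW_meas.integral_prod_right'
    exact this.congr (Eventually.of_forall fun x => (hF_eqW x).symm)
  -- measurability of J
  have hJ_meas : AEStronglyMeasurable J volume := by
    have hcont : Continuous (fun p : ℝ × ℝ => f (p.1 + p.2) - f p.1) :=
      (hf_cont.comp (continuous_fst.add continuous_snd)).sub
        (hf_cont.comp continuous_fst)
    exact hcont.stronglyMeasurable.aestronglyMeasurable.integral_prod_right'
  -- integrability of the two pieces on Ioi 0
  have hint1 : IntegrableOn (fun x => F x * deriv f x) (Ioi 0) volume := by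
    apply Integrable.integrableOn
    apply Integrable.mono' (hf'_int.norm.const_mul (M * Cπ))
      (hF_meas.mul hf'.aestronglyMeasurable)
    refine Eventually.of_forall fun x => ?_
    show ‖F x * deriv f x‖ ≤ M * Cπ * ‖deriv f x‖
    rw [norm_mul]
    exact mul_le_mul_of_nonneg_right (hF_bound x) (norm_nonneg _)
  have hint2 : IntegrableOn (fun x => J x * π x) (Ioi 0) volume := by
    apply Integrable.integrableOn
    apply Integrable.mono' (hπ_int.norm.const_mul (M * (2 * Cf)))
      (hJ_meas.mul hπ_int.1)
    refine Eventually.of_forall fun x => ?_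
    show ‖J x * π x‖ ≤ M * (2 * Cf) * ‖π x‖
    rw [norm_mul]
    exact mul_le_mul_of_nonneg_right (hJ_bound x) (norm_nonneg _)
  -- Step A: rewrite the integrand on Ioi 0
  have hstepA : ∫ x in Ioi 0, (φ x * deriv f x + ∫ z, (f (x + z) - f x) ∂μ) * π x
      = ∫ x in Ioi 0, (-(F x * deriv f x) + J x * π x) := by
    apply setIntegral_congr_fun measurableSet_Ioi
    intro x hx
    have hπx : π x ≠ 0 := ne_of_gt (hπ_pos x hx)
    have hφπ : φ x * π x = -F x := by
      rw [hφ x hx]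
      field_simp [hF_def, hg_def]
      rfl
    calc (φ x * deriv f x + J x) * π x
        = (φ x * π x) * deriv f x + J x * π x := by ring
      _ = -(F x * deriv f x) + J x * π x := by rw [hφπ]; ring
  rw [hstepA]
  -- Step C: the key Fubini identity
  set H : ℝ × ℝ → ℝ :=
    {p : ℝ × ℝ | 0 < p.1 ∧ p.1 < p.2}.indicator
      (fun p => π p.1 * (deriv f p.2 * g (p.2 - p.1)))
    with hH_def
  have hHset : MeasurableSet {p : ℝ × ℝ | 0 < p.1 ∧ p.1 < p.2} :=
    (measurableSet_lt measurable_const measurable_fst).inter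
      (measurableSet_lt measurable_fst measurable_snd)
  have hH_meas : AEStronglyMeasurable H (volume.prod volume) := by
    apply AEStronglyMeasurable.indicator _ hHset
    exact hπ_int.1.comp_fst.mul
      (((hf'.comp continuous_snd).aestronglyMeasurable).mul
        ((hg_meas.comp (measurable_snd.sub measurable_fst)).aestronglyMeasurable))
  have hH_int : Integrable H (volume.prod volume) := by
    apply Integrable.mono' (hπ_int.norm.mul_prod (hf'_int.norm.mul_const M)) hH_meas
    refine Eventually.of_forall fun p => ?_
    calc ‖H p‖ ≤ ‖π p.1 * (deriv f p.2 * g (p.2 - p.1))‖ :=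
          norm_indicator_le_norm_self _ _
      _ = ‖π p.1‖ * (‖deriv f p.2‖ * ‖g (p.2 - p.1)‖) := by rw [norm_mul, norm_mul]
      _ ≤ ‖π p.1‖ * (‖deriv f p.2‖ * M) := by
          apply mul_le_mul_of_nonneg_left _ (norm_nonneg _)
          apply mul_le_mul_of_nonneg_left _ (norm_nonneg _)
          rw [Real.norm_of_nonneg (hg_nonneg _)]
          exact hg_le _
  have h1 : ∀ x, (Ioi (0:ℝ)).indicator (fun x => J x * π x) x = ∫ y, H (x, y) := by
    intro x
    by_cases hx : (0:ℝ) < x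
    · rw [indicator_of_mem (show x ∈ Ioi (0:ℝ) from hx)]
      show J x * π x = ∫ y, H (x, y)
      rw [hJ_eq x]
      have h7 : ∀ y, H (x, y)
          = ((Ioi x).indicator (fun y => deriv f y * g (y - x)) y) * π x := by
        intro y
        simp only [hH_def, indicator, mem_setOf_eq, mem_Ioi, hx, true_and]
        by_cases hy : x < y <;> simp [hy, mul_comm, mul_assoc, mul_left_comm]
      rw [integral_congr_ae (Eventually.of_forall h7), integral_mul_const]
    · rw [indicator_of_notMem (show x ∉ Ioi (0:ℝ) from hx)]
      have h7 : ∀ y, H (x, y) = 0 := by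
        intro y
        apply indicator_of_notMem
        simp only [mem_setOf_eq, not_and]
        intro h; exact absurd h hx
      rw [integral_congr_ae (Eventually.of_forall h7), integral_zero]
  have h2 : ∀ y, ∫ x, H (x, y) = F y * deriv f y := by
    intro y
    have h8 : ∀ x, H (x, y)
        = (Ioo (0:ℝ) y).indicator (fun x => g (y - x) * π x) x * deriv f y := by
      intro x
      simp only [hH_def, indicator, mem_setOf_eq, mem_Ioo]
      by_cases hx : 0 < x ∧ x < y <;> simp [hx, mul_comm, mul_assoc, mul_left_comm]
    rw [integral_congr_ae (Eventually.of_forall h8), integral_mul_const,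
      integral_indicator measurableSet_Ioo]
  have hF_zero : ∀ y, y ∉ Ioi (0:ℝ) → F y * deriv f y = 0 := by
    intro y hy
    have : Ioo (0:ℝ) y = ∅ := Ioo_eq_empty (by simpa using hy)
    rw [hF_def]
    simp [this]
  have hstepC : ∫ x in Ioi 0, J x * π x = ∫ x in Ioi 0, F x * deriv f x := by
    calc ∫ x in Ioi 0, J x * π x
        = ∫ x, (Ioi (0:ℝ)).indicator (fun x => J x * π x) x :=
          (integral_indicator measurableSet_Ioi).symm
      _ = ∫ x, ∫ y, H (x, y) := integral_congr_ae (Eventually.of_forall h1)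
      _ = ∫ y, ∫ x, H (x, y) := integral_integral_swap hH_int
      _ = ∫ y, F y * deriv f y := integral_congr_ae (Eventually.of_forall h2)
      _ = ∫ y in Ioi 0, F y * deriv f y :=
          (setIntegral_eq_integral_of_forall_compl_eq_zero hF_zero).symm
  have hint1' : IntegrableOn (fun x => -(F x * deriv f x)) (Ioi 0) volume := hint1.neg
  rw [integral_add hint1' hint2, integral_neg, hstepC]
  ring
end

section
/- Let μ be a Borel measure on ℝ with μ({0}) = 0 and ∫_ℝ min(1,|z|) dμ(z) < ∞, and let π : ℝ → [0,∞) be Lebesgue-integrable. Define the signed integrated tail μ̄_s(u) := μ((u,∞)) for u > 0, μ̄_s(u) := −μ((−∞,u)) for u < 0, μ̄_s(0) := 0. Then for every smooth compactly supported f : ℝ → ℝ, ∫_ℝ ∫_ℝ ( f(x+z) − f(x) ) dμ(z) π(x) dx = ∫_ℝ ( ∫_ℝ μ̄_s(y−x) π(x) dx ) f'(y) dy, both double integrals being absolutely convergent. -/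
open MeasureTheory Set Filter
open scoped ENNReal

theorem aux_sigmaFinite (μ : Measure ℝ) (hμ0 : μ {0} = 0)
    (hμint : ∫⁻ z, ENNReal.ofReal (min 1 |z|) ∂μ < ⊤) : SigmaFinite μ := by
  have hmeas : Measurable fun z : ℝ => ENNReal.ofReal (min 1 |z|) :=
    (measurable_const.min continuous_abs.measurable).ennreal_ofReal
  refine ⟨⟨⟨fun n => {z : ℝ | 1/(n+1) ≤ |z|} ∪ {0}, fun _ => trivial, ?_, ?_⟩⟩⟩
  · intro n
    set ε : ℝ≥0∞ := ENNReal.ofReal (1/(n+1 : ℝ)) with hε_def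
    have hεpos : 0 < (1:ℝ)/(n+1) := by positivity
    have hn1 : (0:ℝ) < n + 1 := by positivity
    have hε0 : ε ≠ 0 := by
      rw [hε_def]
      simp only [ne_eq, ENNReal.ofReal_eq_zero, not_le]
      positivity
    have hεtop : ε ≠ ⊤ := ENNReal.ofReal_ne_top
    have hsub : {z : ℝ | 1/(n+1:ℝ) ≤ |z|} ⊆ {z : ℝ | ε ≤ ENNReal.ofReal (min 1 |z|)} := by
      intro z hz
      simp only [mem_setOf_eq] at *
      refine ENNReal.ofReal_le_ofReal (le_min ?_ hz)
      rw [div_le_one (by positivity)]; linarith [Nat.cast_nonneg (α := ℝ) n]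
    have key := mul_meas_ge_le_lintegral₀ (μ := μ) hmeas.aemeasurable ε
    have hfin : μ {z : ℝ | ε ≤ ENNReal.ofReal (min 1 |z|)} < ⊤ := by
      by_contra h
      rw [not_lt, top_le_iff] at h
      rw [h, ENNReal.mul_top hε0] at key
      exact absurd (lt_of_le_of_lt key hμint) (lt_irrefl _)
    calc μ ({z : ℝ | 1/(n+1:ℝ) ≤ |z|} ∪ {0})
        ≤ μ {z : ℝ | 1/(n+1:ℝ) ≤ |z|} + μ {0} := measure_union_le _ _
      _ = μ {z : ℝ | 1/(n+1:ℝ) ≤ |z|} := by rw [hμ0, add_zero]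
      _ ≤ μ {z : ℝ | ε ≤ ENNReal.ofReal (min 1 |z|)} := measure_mono hsub
      _ < ⊤ := hfin
  · ext z
    simp only [mem_iUnion, mem_union, mem_setOf_eq, mem_singleton_iff, mem_univ, iff_true]
    rcases eq_or_ne z 0 with h | h
    · exact ⟨0, Or.inr h⟩
    · have hz : 0 < |z| := abs_pos.mpr h
      obtain ⟨n, hn⟩ := exists_nat_one_div_lt hz
      exact ⟨n, Or.inl (le_of_lt hn)⟩

theorem aux_mubar_meas (μ : Measure ℝ) (mubar : ℝ → ℝ)
    (hmubar_pos : ∀ u > (0 : ℝ), mubar u = (μ (Ioi u)).toReal)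
    (hmubar_neg : ∀ u < (0 : ℝ), mubar u = -(μ (Iio u)).toReal)
    (hmubar_zero : mubar 0 = 0) : Measurable mubar := by
  have h1 : Antitone fun u : ℝ => μ (Ioi u) := fun a b hab => measure_mono (Ioi_subset_Ioi hab)
  have h2 : Monotone fun u : ℝ => μ (Iio u) := fun a b hab => measure_mono (Iio_subset_Iio hab)
  have e : mubar = fun u => if 0 < u then (μ (Ioi u)).toReal
      else if u < 0 then -(μ (Iio u)).toReal else 0 := by
    funext u
    rcases lt_trichotomy u 0 with h | h | h
    · rw [if_neg (by linarith), if_pos h, hmubar_neg u h]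
    · rw [if_neg (by simp [h]), if_neg (by simp [h]), h, hmubar_zero]
    · rw [if_pos h, hmubar_pos u h]
  rw [e]
  exact Measurable.ite (measurableSet_lt measurable_const measurable_id)
    h1.measurable.ennreal_toReal
    (Measurable.ite (measurableSet_lt measurable_id measurable_const)
      h2.measurable.ennreal_toReal.neg measurable_const)

theorem ofReal_norm_eq_coe_nnnorm {E : Type*} [SeminormedAddCommGroup E] (a : E) :
    ENNReal.ofReal ‖a‖ = (‖a‖₊ : ℝ≥0∞) := ofReal_norm a

noncomputable def kk (F : ℝ → ℝ) (x z y : ℝ) : ℝ :=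
  (Set.Ico x (x + z)).indicator F y - (Set.Ioc (x + z) x).indicator F y

theorem kk_meas {F : ℝ → ℝ} (hF : Measurable F) :
    Measurable fun p : ℝ × ℝ × ℝ => kk F p.1 p.2.1 p.2.2 := by
  have e : (fun p : ℝ × ℝ × ℝ => kk F p.1 p.2.1 p.2.2)
      = fun p : ℝ × ℝ × ℝ =>
        Set.indicator {q : ℝ × ℝ × ℝ | q.1 ≤ q.2.2 ∧ q.2.2 < q.1 + q.2.1} (fun q => F q.2.2) p
        - Set.indicator {q : ℝ × ℝ × ℝ | q.1 + q.2.1 < q.2.2 ∧ q.2.2 ≤ q.1} (fun q => F q.2.2) p := by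
    funext p
    simp only [kk, Set.indicator_apply, Set.mem_Ico, Set.mem_Ioc, Set.mem_setOf_eq]
  rw [e]
  have hm1 : MeasurableSet {q : ℝ × ℝ × ℝ | q.1 ≤ q.2.2 ∧ q.2.2 < q.1 + q.2.1} := by
    exact (measurableSet_le measurable_fst (measurable_snd.comp measurable_snd)).inter
      (measurableSet_lt (measurable_snd.comp measurable_snd)
        (measurable_fst.add (measurable_fst.comp measurable_snd)))
  have hm2 : MeasurableSet {q : ℝ × ℝ × ℝ | q.1 + q.2.1 < q.2.2 ∧ q.2.2 ≤ q.1} := by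
    exact (measurableSet_lt (measurable_fst.add (measurable_fst.comp measurable_snd))
      (measurable_snd.comp measurable_snd)).inter
      (measurableSet_le (measurable_snd.comp measurable_snd) measurable_fst)
  exact ((hF.comp (measurable_snd.comp measurable_snd)).indicator hm1).sub
    ((hF.comp (measurable_snd.comp measurable_snd)).indicator hm2)

theorem kk_integral_y {f : ℝ → ℝ} (hf : ContDiff ℝ (⊤ : ℕ∞) f) (x z : ℝ) :
    ∫ y, kk (deriv f) x z y = f (x + z) - f x := by
  have hF_cont : Continuous (deriv f) := hf.continuous_deriv (by simp)
  have hdiff : Differentiable ℝ f := hf.differentiable (by simp)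
  unfold kk
  rcases lt_trichotomy z 0 with hz | hz | hz
  · have h1 : Ico x (x + z) = ∅ := Ico_eq_empty (by intro h; linarith)
    have h2 : x + z ≤ x := by linarith
    rw [h1]
    simp only [indicator_empty, zero_sub]
    rw [integral_neg, integral_indicator measurableSet_Ioc]
    have h3 : ∫ y in Ioc (x + z) x, deriv f y = f x - f (x + z) := by
      rw [← intervalIntegral.integral_of_le h2]
      exact intervalIntegral.integral_deriv_eq_sub (fun y _ => hdiff.differentiableAt)
        (hF_cont.intervalIntegrable _ _)
    rw [h3]; ring
  · subst hz; simp
  · have h2 : Ioc (x + z) x = ∅ := Ioc_eq_empty (by intro h; linarith)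
    have hle : x ≤ x + z := by linarith
    rw [h2]
    simp only [indicator_empty, sub_zero]
    rw [integral_indicator measurableSet_Ico]
    calc ∫ y in Ico x (x + z), deriv f y = ∫ y in Ioc x (x + z), deriv f y := by
          rw [integral_Ico_eq_integral_Ioo, integral_Ioc_eq_integral_Ioo]
      _ = f (x + z) - f x := by
          rw [← intervalIntegral.integral_of_le hle]
          exact intervalIntegral.integral_deriv_eq_sub (fun y _ => hdiff.differentiableAt)
            (hF_cont.intervalIntegrable _ _)

theorem kk_intz_lt (μ : Measure ℝ) (F : ℝ → ℝ) {x y : ℝ} (hxy : x < y) :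
    ∫ z, kk F x z y ∂μ = (μ (Ioi (y - x))).toReal * F y := by
  have e : (fun z => kk F x z y) = (Ioi (y - x)).indicator (fun _ => F y) := by
    funext z
    simp only [kk, indicator_apply, mem_Ico, mem_Ioc, mem_Ioi]
    by_cases h : y - x < z
    · rw [if_pos ⟨hxy.le, by linarith⟩, if_neg (fun hc => absurd hc.2 (not_le.mpr hxy)),
        if_pos h, sub_zero]
    · rw [if_neg (fun hc => h (by linarith [hc.2])),
        if_neg (fun hc => absurd hc.2 (not_le.mpr hxy)), if_neg h, sub_zero]
  rw [e, integral_indicator measurableSet_Ioi, setIntegral_const, smul_eq_mul, measureReal_def]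

theorem kk_intz_gt (μ : Measure ℝ) (F : ℝ → ℝ) {x y : ℝ} (hxy : y < x) :
    ∫ z, kk F x z y ∂μ = -((μ (Iio (y - x))).toReal * F y) := by
  have e : (fun z => kk F x z y) = fun z => -((Iio (y - x)).indicator (fun _ => F y) z) := by
    funext z
    simp only [kk, indicator_apply, mem_Ico, mem_Ioc, mem_Iio]
    by_cases h : z < y - x
    · rw [if_neg (fun hc => absurd hc.1 (not_le.mpr hxy)), if_pos ⟨by linarith, hxy.le⟩,
        if_pos h, zero_sub]
    · rw [if_neg (fun hc => absurd hc.1 (not_le.mpr hxy)), if_neg (fun hc => h (by linarith [hc.1])),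
        if_neg h, zero_sub, neg_zero]
  rw [e, integral_neg, integral_indicator measurableSet_Iio, setIntegral_const, smul_eq_mul, measureReal_def]

theorem kk_lintegral_y_bound {F : ℝ → ℝ} {C : ℝ}
    (hC : ∀ y, ‖F y‖ ≤ C) (x z : ℝ) :
    ∫⁻ y, (‖kk F x z y‖₊ : ℝ≥0∞)
      ≤ (ENNReal.ofReal C + ∫⁻ y, (‖F y‖₊ : ℝ≥0∞)) * ENNReal.ofReal (min 1 |z|) := by
  set I1 := ∫⁻ y, (‖F y‖₊ : ℝ≥0∞) with hI1_def
  have bF : ∀ s : Set ℝ, (∫⁻ y in s, (‖F y‖₊ : ℝ≥0∞)) ≤ ENNReal.ofReal C * volume s := by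
    intro s
    calc (∫⁻ y in s, (‖F y‖₊ : ℝ≥0∞)) ≤ ∫⁻ _ in s, ENNReal.ofReal C := by
          refine lintegral_mono fun y => ?_
          rw [← ofReal_norm_eq_coe_nnnorm]
          exact ENNReal.ofReal_le_ofReal (hC y)
      _ = ENNReal.ofReal C * volume s := setLIntegral_const s _
  have bI : ∀ s : Set ℝ, (∫⁻ y in s, (‖F y‖₊ : ℝ≥0∞)) ≤ I1 :=
    fun s => setLIntegral_le_lintegral s _
  have fin : ∀ A : ℝ≥0∞, A ≤ ENNReal.ofReal C * ENNReal.ofReal |z| → A ≤ I1 →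
      A ≤ (ENNReal.ofReal C + I1) * ENNReal.ofReal (min 1 |z|) := by
    intro A hA1 hA2
    rcases le_or_gt |z| 1 with h | h
    · rw [min_eq_right h]
      exact hA1.trans (mul_le_mul_left le_self_add _)
    · rw [min_eq_left h.le, ENNReal.ofReal_one, mul_one]
      exact hA2.trans le_add_self
  rcases le_or_gt z 0 with hz | hz
  · have h1 : Ico x (x + z) = ∅ := Ico_eq_empty (by intro h; linarith)
    have e : ∀ y, (‖kk F x z y‖₊ : ℝ≥0∞)
        = (Ioc (x + z) x).indicator (fun y => (‖F y‖₊ : ℝ≥0∞)) y := by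
      intro y
      by_cases h : y ∈ Ioc (x + z) x <;>
        simp [kk, h1, indicator_of_mem, indicator_of_notMem, h]
    rw [lintegral_congr e, lintegral_indicator measurableSet_Ioc _]
    refine fin _ ?_ (bI _)
    have hv : volume (Ioc (x + z) x) = ENNReal.ofReal |z| := by
      rw [Real.volume_Ioc, abs_of_nonpos hz]; ring_nf
    rw [← hv]; exact bF _
  · have h2 : Ioc (x + z) x = ∅ := Ioc_eq_empty (by intro h; linarith)
    have e : ∀ y, (‖kk F x z y‖₊ : ℝ≥0∞)
        = (Ico x (x + z)).indicator (fun y => (‖F y‖₊ : ℝ≥0∞)) y := by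
      intro y
      by_cases h : y ∈ Ico x (x + z) <;>
        simp [kk, h2, indicator_of_mem, indicator_of_notMem, h]
    rw [lintegral_congr e, lintegral_indicator measurableSet_Ico _]
    refine fin _ ?_ (bI _)
    have hv : volume (Ico x (x + z)) = ENNReal.ofReal |z| := by
      rw [Real.volume_Ico, abs_of_pos hz]; ring_nf
    rw [← hv]; exact bF _

/-- the jump part of the generator, tested against a density `π`, equals
the weak derivative of the convolution of `π` with the signed integrated tail `μ̄ₛ`;
both double integrals converge absolutely. -/
theorem jump_part_eq_weak_derivative_of_tail_convolution
    (μ : Measure ℝ) (hμ0 : μ {0} = 0)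
    (hμint : ∫⁻ z, ENNReal.ofReal (min 1 |z|) ∂μ < ⊤)
    (π : ℝ → ℝ) (hπ_int : Integrable π) (hπ_nonneg : ∀ x, 0 ≤ π x)
    (mubar : ℝ → ℝ)
    (hmubar_pos : ∀ u > (0 : ℝ), mubar u = (μ (Ioi u)).toReal)
    (hmubar_neg : ∀ u < (0 : ℝ), mubar u = -(μ (Iio u)).toReal)
    (hmubar_zero : mubar 0 = 0)
    (f : ℝ → ℝ) (hf : ContDiff ℝ (⊤ : ℕ∞) f) (hf_supp : HasCompactSupport f) :
    (∫⁻ x, ∫⁻ z, ENNReal.ofReal |(f (x + z) - f x) * π x| ∂μ) < ⊤ ∧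
    (∫⁻ y, ∫⁻ x, ENNReal.ofReal |mubar (y - x) * π x * deriv f y|) < ⊤ ∧
    ∫ x, (∫ z, (f (x + z) - f x) ∂μ) * π x
      = ∫ y, (∫ x, mubar (y - x) * π x) * deriv f y := by
  classical
  set F := deriv f with hF_def
  have hF_cont : Continuous F := hf.continuous_deriv (by simp)
  have hF_meas : Measurable F := hF_cont.measurable
  have hF_supp : HasCompactSupport F := hf_supp.deriv
  obtain ⟨C, hC⟩ := hF_supp.exists_bound_of_continuous hF_cont
  have hC0 : 0 ≤ C := le_trans (norm_nonneg _) (hC 0)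
  have hF_int : Integrable F := hF_cont.integrable_of_hasCompactSupport hF_supp
  set I1 := ∫⁻ y, (‖F y‖₊ : ℝ≥0∞) with hI1_def
  have hI1 : I1 < ⊤ := hF_int.2
  set D := ENNReal.ofReal C + I1 with hD_def
  have hD : D ≠ ⊤ := by
    simp only [hD_def, Ne, ENNReal.add_eq_top, ENNReal.ofReal_ne_top, false_or]
    exact hI1.ne
  set M := ∫⁻ z, ENNReal.ofReal (min 1 |z|) ∂μ with hM_def
  have hM : M ≠ ⊤ := hμint.ne
  haveI : SigmaFinite μ := aux_sigmaFinite μ hμ0 hμint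
  have hmin_meas : Measurable fun z : ℝ => ENNReal.ofReal (min 1 |z|) :=
    (measurable_const.min continuous_abs.measurable).ennreal_ofReal
  have hmubar_meas : Measurable mubar := aux_mubar_meas μ mubar hmubar_pos hmubar_neg hmubar_zero
  -- bound on f
  obtain ⟨B, hB⟩ := hf_supp.exists_bound_of_continuous hf.continuous
  have hB0 : 0 ≤ B := le_trans (norm_nonneg _) (hB 0)
  have hdiff : Differentiable ℝ f := hf.differentiable (by simp)
  have hlip : ∀ a b : ℝ, |f a - f b| ≤ C * |a - b| := by
    intro a b
    have h := Convex.norm_image_sub_le_of_norm_deriv_le (s := (Set.univ : Set ℝ))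
      (fun x _ => hdiff.differentiableAt) (fun x _ => hC x) convex_univ (mem_univ b) (mem_univ a)
    simpa [Real.norm_eq_abs] using h
  have hfbound : ∀ x z : ℝ, |f (x + z) - f x| ≤ (2 * B + C) * min 1 |z| := by
    intro x z
    rcases le_or_gt |z| 1 with h | h
    · rw [min_eq_right h]
      have h1 : |f (x + z) - f x| ≤ C * |z| := by
        have := hlip (x + z) x
        simpa using this
      nlinarith [abs_nonneg z]
    · rw [min_eq_left h.le, mul_one]
      have h1 := hB (x + z); have h2 := hB x
      rw [Real.norm_eq_abs] at h1 h2
      calc |f (x + z) - f x| ≤ |f (x + z)| + |f x| := abs_sub _ _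
        _ ≤ 2 * B + C := by linarith
  -- Part 1
  have part1 : (∫⁻ x, ∫⁻ z, ENNReal.ofReal |(f (x + z) - f x) * π x| ∂μ) < ⊤ := by
    have hππ : ∀ x : ℝ, ENNReal.ofReal |π x| = (‖π x‖₊ : ℝ≥0∞) := fun x => by
      rw [← Real.norm_eq_abs, ofReal_norm_eq_coe_nnnorm]
    have step : ∀ x, (∫⁻ z, ENNReal.ofReal |(f (x + z) - f x) * π x| ∂μ)
        ≤ (ENNReal.ofReal (2 * B + C) * M) * ENNReal.ofReal |π x| := by
      intro x
      calc ∫⁻ z, ENNReal.ofReal |(f (x + z) - f x) * π x| ∂μ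
          ≤ ∫⁻ z, (ENNReal.ofReal (2 * B + C) * ENNReal.ofReal (min 1 |z|))
              * ENNReal.ofReal |π x| ∂μ := by
            refine lintegral_mono fun z => ?_
            rw [abs_mul, ← ENNReal.ofReal_mul (by positivity),
              ← ENNReal.ofReal_mul (by positivity)]
            exact ENNReal.ofReal_le_ofReal
              (mul_le_mul_of_nonneg_right (hfbound x z) (abs_nonneg _))
        _ = (ENNReal.ofReal (2 * B + C) * M) * ENNReal.ofReal |π x| := by
            rw [lintegral_mul_const' _ _ ENNReal.ofReal_ne_top,
              lintegral_const_mul _ hmin_meas]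
    calc (∫⁻ x, ∫⁻ z, ENNReal.ofReal |(f (x + z) - f x) * π x| ∂μ)
        ≤ ∫⁻ x, (ENNReal.ofReal (2 * B + C) * M) * ENNReal.ofReal |π x| := lintegral_mono step
      _ = (ENNReal.ofReal (2 * B + C) * M) * ∫⁻ x, ENNReal.ofReal |π x| :=
          lintegral_const_mul' _ _ (ENNReal.mul_ne_top ENNReal.ofReal_ne_top hM)
      _ < ⊤ := by
          refine ENNReal.mul_lt_top
            (lt_of_le_of_ne le_top (ENNReal.mul_ne_top ENNReal.ofReal_ne_top hM)) ?_
          simp only [hππ]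
          exact hπ_int.2
  -- measurable nonnegative version of π
  set ρ : ℝ → ℝ := fun x => max (hπ_int.1.mk π x) 0 with hρ_def
  have hρ_meas : Measurable ρ := hπ_int.1.measurable_mk.max measurable_const
  have hρπ : π =ᵐ[volume] ρ := by
    filter_upwards [hπ_int.1.ae_eq_mk] with x hx
    rw [hρ_def]
    simp only [← hx, max_eq_left (hπ_nonneg x)]
  have hρ_nonneg : ∀ x, 0 ≤ ρ x := fun x => le_max_right _ _
  have hρ_int : Integrable ρ := hπ_int.congr hρπ
  set Iρ := ∫⁻ x, ENNReal.ofReal (ρ x) with hIρ_def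
  have hρρ : ∀ x : ℝ, ENNReal.ofReal (ρ x) = (‖ρ x‖₊ : ℝ≥0∞) := fun x => by
    rw [← ofReal_norm_eq_coe_nnnorm, Real.norm_eq_abs, abs_of_nonneg (hρ_nonneg x)]
  have hIρ : Iρ ≠ ⊤ := by
    rw [hIρ_def]
    simp only [hρρ]
    exact hρ_int.2.ne
  -- joint measurability
  have hkk3 : Measurable fun p : ℝ × ℝ × ℝ => kk F p.1 p.2.1 p.2.2 := kk_meas hF_meas
  have hkk_zy : ∀ x : ℝ, Measurable fun q : ℝ × ℝ => kk F x q.1 q.2 :=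
    fun x => hkk3.comp (measurable_const.prodMk measurable_id)
  set hfun : ℝ × ℝ → ℝ := fun p => mubar (p.2 - p.1) * ρ p.1 * F p.2 with hfun_def
  have hfun_meas : Measurable hfun :=
    ((hmubar_meas.comp (measurable_snd.sub measurable_fst)).mul
      (hρ_meas.comp measurable_fst)).mul (hF_meas.comp measurable_snd)
  -- norm computation
  have hnn : ∀ x z y : ℝ, ((‖kk F x z y * ρ x‖₊ : ℝ≥0∞))
      = (‖kk F x z y‖₊ : ℝ≥0∞) * ENNReal.ofReal (ρ x) := by
    intro x z y
    rw [nnnorm_mul, ENNReal.coe_mul, hρρ x]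
  -- key bounds
  have hW : ∀ x : ℝ, (∫⁻ z, ∫⁻ y, (‖kk F x z y‖₊ : ℝ≥0∞) ∂volume ∂μ) ≤ D * M := by
    intro x
    calc (∫⁻ z, ∫⁻ y, (‖kk F x z y‖₊ : ℝ≥0∞) ∂volume ∂μ)
        ≤ ∫⁻ z, D * ENNReal.ofReal (min 1 |z|) ∂μ :=
          lintegral_mono fun z => kk_lintegral_y_bound hC x z
      _ = D * M := lintegral_const_mul' _ _ hD
  have hWswap : ∀ x : ℝ,
      (∫⁻ y, ∫⁻ z, (‖kk F x z y‖₊ : ℝ≥0∞) ∂μ ∂volume)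
        = ∫⁻ z, ∫⁻ y, (‖kk F x z y‖₊ : ℝ≥0∞) ∂volume ∂μ := by
    intro x
    exact lintegral_lintegral_swap
      (((hkk_zy x).comp measurable_swap).enorm.aemeasurable)
  -- a.e. pointwise bound in y
  have hptw : ∀ x : ℝ, ∀ᵐ y : ℝ, ENNReal.ofReal |mubar (y - x) * ρ x * F y|
      ≤ ∫⁻ z, (‖kk F x z y‖₊ : ℝ≥0∞) * ENNReal.ofReal (ρ x) ∂μ := by
    intro x
    have hne : ∀ᵐ y : ℝ, y ≠ x := by
      rw [ae_iff]
      have : {y : ℝ | ¬y ≠ x} = {x} := by ext y; simp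
      rw [this]
      exact measure_singleton x
    filter_upwards [hne] with y hy
    have hG : ∫ z, kk F x z y * ρ x ∂μ = mubar (y - x) * ρ x * F y := by
      rw [integral_mul_const]
      rcases hy.lt_or_gt with h | h
      · rw [kk_intz_gt μ F h, hmubar_neg (y - x) (by linarith)]; ring
      · rw [kk_intz_lt μ F h, hmubar_pos (y - x) (by linarith)]; ring
    calc ENNReal.ofReal |mubar (y - x) * ρ x * F y|
        = (‖∫ z, kk F x z y * ρ x ∂μ‖₊ : ℝ≥0∞) := by
          rw [hG, ← Real.norm_eq_abs, ofReal_norm_eq_coe_nnnorm]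
      _ ≤ ∫⁻ z, (‖kk F x z y * ρ x‖₊ : ℝ≥0∞) ∂μ := enorm_integral_le_lintegral_enorm _
      _ = ∫⁻ z, (‖kk F x z y‖₊ : ℝ≥0∞) * ENNReal.ofReal (ρ x) ∂μ := by
          exact lintegral_congr fun z => hnn x z y
  -- the double lintegral bound, x outer
  have hXY : (∫⁻ x, ∫⁻ y, ENNReal.ofReal |mubar (y - x) * ρ x * F y|) ≤ D * M * Iρ := by
    have step : ∀ x : ℝ, (∫⁻ y, ENNReal.ofReal |mubar (y - x) * ρ x * F y|)
        ≤ (D * M) * ENNReal.ofReal (ρ x) := by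
      intro x
      calc (∫⁻ y, ENNReal.ofReal |mubar (y - x) * ρ x * F y|)
          ≤ ∫⁻ y, ∫⁻ z, (‖kk F x z y‖₊ : ℝ≥0∞) * ENNReal.ofReal (ρ x) ∂μ :=
            lintegral_mono_ae (hptw x)
        _ = (∫⁻ y, ∫⁻ z, (‖kk F x z y‖₊ : ℝ≥0∞) ∂μ) * ENNReal.ofReal (ρ x) := by
            rw [← lintegral_mul_const' _ _ ENNReal.ofReal_ne_top]
            exact lintegral_congr fun y =>
              lintegral_mul_const' _ _ ENNReal.ofReal_ne_top
        _ ≤ (D * M) * ENNReal.ofReal (ρ x) := by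
            rw [hWswap x]
            exact mul_le_mul_left (hW x) _
    calc (∫⁻ x, ∫⁻ y, ENNReal.ofReal |mubar (y - x) * ρ x * F y|)
        ≤ ∫⁻ x, (D * M) * ENNReal.ofReal (ρ x) := lintegral_mono step
      _ = D * M * Iρ := lintegral_const_mul' _ _ (ENNReal.mul_ne_top hD hM)
  have hDMIρ : D * M * Iρ < ⊤ :=
    ENNReal.mul_lt_top
      (lt_of_le_of_ne le_top (ENNReal.mul_ne_top hD hM))
      (lt_of_le_of_ne le_top hIρ)
  -- Part 2
  have part2 : (∫⁻ y, ∫⁻ x, ENNReal.ofReal |mubar (y - x) * π x * F y|) < ⊤ := by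
    have hcongr : ∀ y : ℝ, (∫⁻ x, ENNReal.ofReal |mubar (y - x) * π x * F y|)
        = ∫⁻ x, ENNReal.ofReal |mubar (y - x) * ρ x * F y| := by
      intro y
      refine lintegral_congr_ae ?_
      filter_upwards [hρπ] with x hx
      rw [hx]
    rw [lintegral_congr hcongr]
    have hswapxy : (∫⁻ y, ∫⁻ x, ENNReal.ofReal |mubar (y - x) * ρ x * F y|)
        = ∫⁻ x, ∫⁻ y, ENNReal.ofReal |mubar (y - x) * ρ x * F y| := by
      refine lintegral_lintegral_swap ?_
      have : Measurable fun p : ℝ × ℝ => ENNReal.ofReal |mubar (p.2 - p.1) * ρ p.1 * F p.2| :=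
        ((((hmubar_meas.comp (measurable_snd.sub measurable_fst)).mul
          (hρ_meas.comp measurable_fst)).mul (hF_meas.comp measurable_snd)).abs).ennreal_ofReal
      exact (this.comp measurable_swap).aemeasurable
    rw [hswapxy]
    exact lt_of_le_of_lt hXY hDMIρ
  -- the function G
  set G : ℝ → ℝ → ℝ := fun x y => ∫ z, kk F x z y * ρ x ∂μ with hG_def
  have hGh : ∀ x y : ℝ, x ≠ y → G x y = mubar (y - x) * ρ x * F y := by
    intro x y hxy
    rw [hG_def]
    simp only
    rw [integral_mul_const]
    rcases hxy.lt_or_gt with h | h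
    · rw [kk_intz_lt μ F h, hmubar_pos (y - x) (by linarith)]; ring
    · rw [kk_intz_gt μ F h, hmubar_neg (y - x) (by linarith)]; ring
  -- swap 1 : per x
  have hswap1 : ∀ x : ℝ, ∫ z, ∫ y, kk F x z y * ρ x ∂volume ∂μ
      = ∫ y, ∫ z, kk F x z y * ρ x ∂μ ∂volume := by
    intro x
    have hint : Integrable (Function.uncurry fun z y => kk F x z y * ρ x) (μ.prod volume) := by
      refine ⟨((hkk_zy x).mul measurable_const).aestronglyMeasurable, ?_⟩
      rw [hasFiniteIntegral_def]
      simp only [Function.uncurry]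
      rw [lintegral_prod (fun a : ℝ × ℝ => ‖kk F x a.1 a.2 * ρ x‖ₑ) (((hkk_zy x).mul measurable_const).enorm.aemeasurable)]
      calc (∫⁻ z, ∫⁻ y, (‖kk F x z y * ρ x‖₊ : ℝ≥0∞) ∂volume ∂μ)
          = ∫⁻ z, (∫⁻ y, (‖kk F x z y‖₊ : ℝ≥0∞) ∂volume) * ENNReal.ofReal (ρ x) ∂μ := by
            refine lintegral_congr fun z => ?_
            rw [← lintegral_mul_const' _ _ ENNReal.ofReal_ne_top]
            exact lintegral_congr fun y => hnn x z y
        _ = (∫⁻ z, ∫⁻ y, (‖kk F x z y‖₊ : ℝ≥0∞) ∂volume ∂μ) * ENNReal.ofReal (ρ x) :=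
            lintegral_mul_const' _ _ ENNReal.ofReal_ne_top
        _ ≤ (D * M) * ENNReal.ofReal (ρ x) := mul_le_mul_left (hW x) _
        _ < ⊤ := ENNReal.mul_lt_top
            (lt_of_le_of_ne le_top (ENNReal.mul_ne_top hD hM))
            (lt_of_le_of_ne le_top ENNReal.ofReal_ne_top)
    exact integral_integral_swap hint
  -- diagonal is null
  have hdiag : (volume.prod (volume : Measure ℝ)) {p : ℝ × ℝ | p.1 = p.2} = 0 := by
    rw [Measure.prod_apply (measurableSet_eq_fun measurable_fst measurable_snd)]
    have hpre : ∀ x : ℝ, (Prod.mk x ⁻¹' {p : ℝ × ℝ | p.1 = p.2}) = {x} := by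
      intro x; ext y; simp [eq_comm]
    simp only [hpre, measure_singleton, lintegral_const, zero_mul]
  have haeneq : ∀ᵐ p : ℝ × ℝ ∂(volume.prod volume), p.1 ≠ p.2 := by
    rw [ae_iff]
    have : {p : ℝ × ℝ | ¬p.1 ≠ p.2} = {p : ℝ × ℝ | p.1 = p.2} := by ext p; simp
    rw [this]; exact hdiag
  have hGae : (Function.uncurry G) =ᵐ[volume.prod volume] hfun := by
    filter_upwards [haeneq] with p hp
    exact hGh p.1 p.2 hp
  -- integrability of hfun on the product
  have hfun_int : Integrable hfun (volume.prod volume) := by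
    refine ⟨hfun_meas.aestronglyMeasurable, ?_⟩
    rw [hasFiniteIntegral_def]
    rw [lintegral_prod _ hfun_meas.enorm.aemeasurable]
    have : ∀ x : ℝ, (∫⁻ y, (‖hfun (x, y)‖₊ : ℝ≥0∞))
        = ∫⁻ y, ENNReal.ofReal |mubar (y - x) * ρ x * F y| := by
      intro x
      refine lintegral_congr fun y => ?_
      rw [hfun_def]
      simp only
      rw [← Real.norm_eq_abs, ofReal_norm_eq_coe_nnnorm]
    rw [lintegral_congr (f := fun x => ∫⁻ y, ‖hfun (x, y)‖ₑ) this]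
    exact lt_of_le_of_lt hXY hDMIρ
  have hG_int : Integrable (Function.uncurry G) (volume.prod volume) :=
    hfun_int.congr hGae.symm
  -- the equality
  have part3 : ∫ x, (∫ z, (f (x + z) - f x) ∂μ) * π x
      = ∫ y, (∫ x, mubar (y - x) * π x) * F y := by
    have e1 : ∀ x : ℝ, (∫ z, (f (x + z) - f x) ∂μ) * ρ x = ∫ y, G x y ∂volume := by
      intro x
      rw [← integral_mul_const]
      have ez : ∀ z : ℝ, (f (x + z) - f x) * ρ x = ∫ y, kk F x z y * ρ x ∂volume := by
        intro z
        rw [integral_mul_const, kk_integral_y hf x z]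
      rw [integral_congr_ae (Eventually.of_forall ez), hswap1 x]
    calc ∫ x, (∫ z, (f (x + z) - f x) ∂μ) * π x
        = ∫ x, (∫ z, (f (x + z) - f x) ∂μ) * ρ x := by
          refine integral_congr_ae ?_
          filter_upwards [hρπ] with x hx
          rw [hx]
      _ = ∫ x, ∫ y, G x y ∂volume := integral_congr_ae (Eventually.of_forall e1)
      _ = ∫ y, ∫ x, G x y ∂volume ∂volume := integral_integral_swap hG_int
      _ = ∫ y, (∫ x, mubar (y - x) * π x) * F y := by
          refine integral_congr_ae (Eventually.of_forall fun y => ?_)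
          have hxney : ∀ᵐ x : ℝ, x ≠ y := by
            rw [ae_iff]
            have : {x : ℝ | ¬x ≠ y} = {y} := by ext x; simp
            rw [this]; exact measure_singleton y
          have hx_eq : ∀ᵐ x : ℝ, G x y = mubar (y - x) * ρ x * F y := by
            filter_upwards [hxney] with x hx
            exact hGh x y hx
          show (∫ x, G x y ∂volume) = (∫ x, mubar (y - x) * π x) * F y
          rw [integral_congr_ae hx_eq, integral_mul_const]
          congr 1
          refine integral_congr_ae ?_
          filter_upwards [hρπ] with x hx
          rw [hx]
  exact ⟨part1, part2, part3⟩
end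

section
/- Let μ be a finite Borel measure on ℝ with μ((−∞,0]) = 0 and let π : ℝ → [0,∞) be Lebesgue-integrable with π = 0 on (−∞,0]. Then for every x > 0, ∫_0^x ( ∫_ℝ π(z−u) dμ(u) − μ(ℝ) π(z) ) dz = − ∫_0^x μ((x−z,∞)) π(z) dz. -/
/-!
Both integrands vanish for `z ≤ 0` (there `π(z - u) = 0` for `μ`-a.e. `u > 0`), so `Ioo 0 x`
may be replaced by `Iio x`. By Fubini and translation invariance of Lebesgue measure the left
side becomes `∫ (∫_{Iio (x-u)} π - ∫_{Iio x} π) dμ(u) = -∫ ∫_{[x-u, x)} π dμ(u)`, while writing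
`μ (Ioi (x - z)) = ∫ 1{x - z < u} dμ(u)` turns the right side into `-∫ ∫_{(x-u, x)} π dμ(u)`.
-/

open MeasureTheory Set Filter

lemma setIntegral_Ioo_eq_setIntegral_Iio_of_eq_zero {α E : Type*} [LinearOrder α]
    [TopologicalSpace α] [OrderClosedTopology α] [MeasurableSpace α] [OpensMeasurableSpace α]
    [NormedAddCommGroup E] [NormedSpace ℝ E] {μ : Measure α} {f : α → E} {a : α}
    (hf : ∀ z ≤ a, f z = 0) (b : α) :
    ∫ z in Ioo a b, f z ∂μ = ∫ z in Iio b, f z ∂μ :=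
  (setIntegral_eq_of_subset_of_forall_sdiff_eq_zero measurableSet_Iio Ioo_subset_Iio_self
    fun z hz => hf z (not_lt.1 fun ha => hz.2 ⟨ha, hz.1⟩)).symm

section Translation

variable {E : Type*} [NormedAddCommGroup E] [NormedSpace ℝ E]

lemma setIntegral_Iio_comp_sub_right (π : ℝ → E) (x u : ℝ) :
    ∫ z in Iio x, π (z - u) = ∫ z in Iio (x - u), π z := by
  have h : (Iio x).indicator (fun z => π (z - u)) = fun z => (Iio (x - u)).indicator π (z - u) := by
    ext z
    simp only [indicator, mem_Iio, sub_lt_sub_iff_right]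
  rw [← integral_indicator measurableSet_Iio, h, integral_sub_right_eq_self,
    integral_indicator measurableSet_Iio]

lemma setIntegral_Iio_comp_sub_right_sub_setIntegral_Iio {π : ℝ → E} (hπ : Integrable π)
    (x : ℝ) {u : ℝ} (hu : 0 ≤ u) :
    (∫ z in Iio x, π (z - u)) - ∫ z in Iio x, π z = -∫ z in Ico (x - u) x, π z := by
  rw [setIntegral_Iio_comp_sub_right, ← Iio_union_Ico_eq_Iio (sub_le_self x hu),
    setIntegral_union (Iio_disjoint_Ici le_rfl |>.mono_right Ico_subset_Ici_self)
      measurableSet_Ico hπ.integrableOn hπ.integrableOn]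
  abel

end Translation

section Fubini

variable (μ : Measure ℝ) [IsFiniteMeasure μ] {π : ℝ → ℝ}

lemma setIntegral_integral_comp_sub_sub_measure_univ_mul (hπ : Integrable π) (s : Set ℝ) :
    ∫ z in s, ((∫ u, π (z - u) ∂μ) - (μ univ).toReal * π z)
      = ∫ u, ((∫ z in s, π (z - u)) - ∫ z in s, π z) ∂μ := by
  have h : Integrable (fun p : ℝ × ℝ => π (p.1 - p.2)) ((volume.restrict s).prod μ) := by
    have := ((integrable_const (1 : ℝ)).convolution_integrand (ContinuousLinearMap.lsmul ℝ ℝ) hπ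
      (μ := volume) (ν := μ)).restrict (s := s ×ˢ univ)
    rw [← Measure.prod_restrict, Measure.restrict_univ] at this
    simpa using this
  have h' : Integrable (fun u => ∫ z in s, π (z - u)) μ := h.swap.integral_prod_left
  rw [integral_sub h.integral_prod_left (hπ.integrableOn.const_mul _), integral_const_mul,
    integral_integral_swap (f := fun z u => π (z - u)) h, integral_sub h' (integrable_const _),
    integral_const]
  rfl

lemma setIntegral_measure_Ioi_sub_mul (hπ : Integrable π) (s : Set ℝ) (x : ℝ) :
    ∫ z in s, (μ (Ioi (x - z))).toReal * π z = ∫ u, (∫ z in s ∩ Ioi (x - u), π z) ∂μ := by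
  set f : ℝ × ℝ → ℝ := {p | x - p.1 < p.2}.indicator fun p => π p.1
  have hf : Integrable f ((volume.restrict s).prod μ) :=
    (hπ.restrict.comp_fst μ).indicator (measurableSet_lt (by fun_prop) (by fun_prop))
  have hz : ∀ z, (μ (Ioi (x - z))).toReal * π z = ∫ u, f (z, u) ∂μ := fun z => by
    rw [show (fun u => f (z, u)) = (Ioi (x - z)).indicator fun _ => π z from rfl,
      integral_indicator_const _ measurableSet_Ioi, smul_eq_mul, measureReal_def]
  have hu : ∀ u, ∫ z in s, f (z, u) = ∫ z in s ∩ Ioi (x - u), π z := fun u => by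
    rw [← setIntegral_indicator measurableSet_Ioi]
    congr 1 with z
    simp only [f, indicator_apply, mem_ofPred_eq, mem_Ioi, sub_lt_comm]
  simp_rw [hz]
  rw [integral_integral_swap (f := fun z u => f (z, u)) hf]
  exact integral_congr_ae (ae_of_all μ hu)

end Fubini

theorem integral_convolution_sub_total_mass_eq_neg_tail_convolution_general
    (μ : Measure ℝ) [IsFiniteMeasure μ] (hμ : μ (Iic 0) = 0)
    (π : ℝ → ℝ) (hπ_int : Integrable π)
    (hπ_zero : ∀ x ≤ 0, π x = 0)
    (x : ℝ) :
    ∫ z in Ioo 0 x, ((∫ u, π (z - u) ∂μ) - (μ univ).toReal * π z)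
      = -∫ z in Ioo 0 x, (μ (Ioi (x - z))).toReal * π z := by
  have hμ_pos : ∀ᵐ u ∂μ, 0 < u := by
    simpa using measure_eq_zero_iff_ae_notMem.1 hμ
  have hlhs_zero : ∀ z ≤ 0, (∫ u, π (z - u) ∂μ) - (μ univ).toReal * π z = 0 := fun z hz => by
    rw [integral_eq_zero_of_ae (f := fun u => π (z - u))
      (hμ_pos.mono fun u hu => hπ_zero _ (by linarith)), hπ_zero z hz, mul_zero, sub_zero]
  have hrhs_zero : ∀ z ≤ 0, (μ (Ioi (x - z))).toReal * π z = 0 := fun z hz => by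
    rw [hπ_zero z hz, mul_zero]
  rw [setIntegral_Ioo_eq_setIntegral_Iio_of_eq_zero hlhs_zero,
    setIntegral_Ioo_eq_setIntegral_Iio_of_eq_zero hrhs_zero,
    setIntegral_integral_comp_sub_sub_measure_univ_mul μ hπ_int,
    setIntegral_measure_Ioi_sub_mul μ hπ_int, ← integral_neg]
  refine integral_congr_ae ?_
  filter_upwards [hμ_pos] with u hu
  rw [setIntegral_Iio_comp_sub_right_sub_setIntegral_Iio hπ_int x hu.le, Iio_inter_Ioi,
    setIntegral_congr_set Ioo_ae_eq_Ico]

/-- representation of the signed-integrated-tail convolution as the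
primitive of `μ*π − |μ|π` (equation (eq_phi1) of the paper). -/
theorem integral_convolution_sub_total_mass_eq_neg_tail_convolution
    (μ : Measure ℝ) [IsFiniteMeasure μ] (hμ : μ (Iic 0) = 0)
    (π : ℝ → ℝ) (hπ_int : Integrable π) (hπ_nonneg : ∀ x, 0 ≤ π x)
    (hπ_zero : ∀ x ≤ 0, π x = 0)
    (x : ℝ) (hx : 0 < x) :
    ∫ z in Ioo 0 x, ((∫ u, π (z - u) ∂μ) - (μ univ).toReal * π z)
      = -∫ z in Ioo 0 x, (μ (Ioi (x - z))).toReal * π z :=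
  integral_convolution_sub_total_mass_eq_neg_tail_convolution_general μ hμ π hπ_int hπ_zero x
end

section
/- Let μ be a nonzero finite Borel measure on ℝ with μ((−∞,0]) = 0 and let π : ℝ → [0,∞) be measurable with π = 0 on (−∞,0] and π(z) > 0 for all z > 0. Suppose there exist C' > 0 and x₀ > 0 such that ∫_0^z π(w) dw ≤ C' z π(z) for all z ∈ (0,x₀]. Then for every x ∈ (0,x₀], ∫_0^x π(z) / ( ∫_0^z μ((z−w,∞)) π(w) dw ) dz = +∞. -/
/-!
The tail `μ((t, ∞))` is at most `μ(ℝ)`, so the hypothesis on `π` gives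
`(μ̄ₛ * π)(z) ≤ μ(ℝ) C' z π(z)`; and `(μ̄ₛ * π)(z) > 0` because `μ` charges
some `(ε, ∞)`.
Hence the integrand is at least `1 / (μ(ℝ) C' z)`, which is not integrable at `0`.
-/

open MeasureTheory Set

theorem measure_Ioi_ne_zero_of_measure_Iic_eq_zero {μ : Measure ℝ} {a : ℝ} (hμ : μ ≠ 0)
    (ha : μ (Iic a) = 0) : μ (Ioi a) ≠ 0 := by
  intro ha'
  refine hμ (Measure.measure_univ_eq_zero.mp (measure_mono_null ?_ (measure_union_null ha ha')))
  rw [Iic_union_Ioi]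

theorem exists_gt_measure_Ioi_pos {μ : Measure ℝ} {a : ℝ} (ha : μ (Ioi a) ≠ 0) :
    ∃ b > a, 0 < μ (Ioi b) := by
  have hcover : Ioi a = ⋃ n : ℕ, Ioi (a + 1 / (n + 1)) := by
    refine Subset.antisymm (fun t ht => ?_)
      (iUnion_subset fun n => Ioi_subset_Ioi (le_add_of_nonneg_right (by positivity)))
    obtain ⟨n, hn⟩ := exists_nat_one_div_lt (sub_pos.2 (mem_Ioi.1 ht))
    exact mem_iUnion.2 ⟨n, by rw [mem_Ioi]; linarith⟩
  obtain ⟨n, hn⟩ := exists_measure_pos_of_not_measure_iUnion_null (hcover ▸ ha)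
  exact ⟨_, by simp only [gt_iff_lt, lt_add_iff_pos_right]; positivity, hn⟩

theorem lintegral_Ioo_ofReal_div_eq_top {c x : ℝ} (hc : 0 < c) (hx : 0 < x) :
    ∫⁻ z in Ioo 0 x, ENNReal.ofReal (c / z) = ⊤ := by
  by_contra h
  have hint : IntegrableOn (fun z => c / z) (Ioo 0 x) :=
    (lintegral_ofReal_ne_top_iff_integrable (by fun_prop)
      ((ae_restrict_iff' measurableSet_Ioo).2 (ae_of_all _ fun z hz => by
        have := hz.1; positivity))).1 h
  have hinv : IntervalIntegrable (fun z => z⁻¹) volume 0 x := by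
    rw [intervalIntegrable_iff_integrableOn_Ioo_of_le hx.le]
    exact IntegrableOn.congr_fun (hint.const_mul c⁻¹) (fun z _ => by field_simp)
      measurableSet_Ioo
  exact hx.ne (by simpa using hinv)

/-- `tailConv μ π x` is the paper's `(μ̄ₛ * π)(x)`. -/
noncomputable def tailConv (μ : Measure ℝ) (π : ℝ → ℝ) (x : ℝ) : ℝ :=
  ∫ w in Ioo 0 x, μ.real (Ioi (x - w)) * π w

section TailConv

variable {μ : Measure ℝ} [IsFiniteMeasure μ] {π : ℝ → ℝ} {x : ℝ}

theorem integrableOn_tailConv_integrand (hπ : IntegrableOn π (Ioo 0 x)) :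
    IntegrableOn (fun w => μ.real (Ioi (x - w)) * π w) (Ioo 0 x) := by
  have htail : Antitone fun t => μ.real (Ioi t) := fun s t hst =>
    measureReal_mono (Ioi_subset_Ioi hst)
  refine hπ.bdd_mul (c := μ.real univ)
    (htail.measurable.comp (measurable_const.sub measurable_id)).aestronglyMeasurable
    (ae_of_all _ fun w => ?_)
  rw [Real.norm_of_nonneg measureReal_nonneg]
  exact measureReal_mono (subset_univ _)

theorem tailConv_le (hπ_nonneg : ∀ w ∈ Ioo 0 x, 0 ≤ π w) (hπ : IntegrableOn π (Ioo 0 x)) :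
    tailConv μ π x ≤ μ.real univ * ∫ w in Ioo 0 x, π w := by
  rw [← integral_const_mul]
  exact setIntegral_mono_of_nonneg (fun w hw => mul_nonneg measureReal_nonneg (hπ_nonneg w hw))
    (fun w hw => mul_le_mul_of_nonneg_right (measureReal_mono (subset_univ _)) (hπ_nonneg w hw))
    (hπ.const_mul _)

/-- Mass of `μ` beyond some `ε > 0` makes the integrand positive for `w` in `(x - ε, x)`. -/
theorem tailConv_pos (hμ : μ (Ioi 0) ≠ 0) (hπ_pos : ∀ w > 0, 0 < π w) (hx : 0 < x)
    (hπ : IntegrableOn π (Ioo 0 x)) : 0 < tailConv μ π x := by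
  obtain ⟨ε, hε, hμε⟩ := exists_gt_measure_Ioi_pos hμ
  have hδ : 0 < min ε x := lt_min hε hx
  have hsupport : Ioo (x - min ε x) x ⊆
      Function.support (fun w => μ.real (Ioi (x - w)) * π w) ∩ Ioo 0 x := by
    intro w ⟨hw₁, hw₂⟩
    have hw₀ : 0 < w := by linarith [min_le_right ε x]
    have hμw : μ (Ioi ε) ≤ μ (Ioi (x - w)) :=
      measure_mono (Ioi_subset_Ioi (by linarith [min_le_left ε x]))
    have htail : 0 < μ.real (Ioi (x - w)) :=
      ENNReal.toReal_pos (hμε.trans_le hμw).ne' (measure_ne_top μ _)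
    exact ⟨(mul_pos htail (hπ_pos w hw₀)).ne', hw₀, hw₂⟩
  rw [tailConv, setIntegral_pos_iff_support_of_nonneg_ae
    ((ae_restrict_iff' measurableSet_Ioo).2 (ae_of_all _ fun w hw =>
      mul_nonneg measureReal_nonneg (hπ_pos w hw.1).le))
    (integrableOn_tailConv_integrand hπ)]
  calc (0 : ENNReal) < volume (Ioo (x - min ε x) x) := by simpa using hδ
    _ ≤ _ := measure_mono hsupport

theorem div_le_div_tailConv (hμ : μ (Ioi 0) ≠ 0) (hπ_pos : ∀ w > 0, 0 < π w) (hx : 0 < x)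
    (hπ : IntegrableOn π (Ioo 0 x)) {C : ℝ} (hC : 0 < C)
    (hπ_le : ∫ w in Ioo 0 x, π w ≤ C * x * π x) :
    (μ.real univ * C)⁻¹ / x ≤ π x / tailConv μ π x := by
  have : NeZero μ := ⟨fun h => hμ (by simp [h])⟩
  have hM : 0 < μ.real univ := measureReal_univ_pos
  have hD := tailConv_pos hμ hπ_pos hx hπ
  have hD_le : tailConv μ π x ≤ μ.real univ * (C * x * π x) :=
    (tailConv_le (fun w hw => (hπ_pos w hw.1).le) hπ).trans
      (mul_le_mul_of_nonneg_left hπ_le hM.le)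
  rw [div_le_div_iff₀ hx hD, inv_mul_le_iff₀ (by positivity)]
  linarith

end TailConv

theorem drift_time_integral_diverges_general
    (μ : Measure ℝ) [IsFiniteMeasure μ] (hμne : μ ≠ 0) (hμ : μ (Iic 0) = 0)
    (π : ℝ → ℝ) (hπ_meas : Measurable π) (hπ_nonneg : ∀ x, 0 ≤ π x)
    (hπ_pos : ∀ z > (0 : ℝ), 0 < π z)
    (C' x₀ : ℝ) (hC' : 0 < C')
    (hbound : ∀ z ∈ Ioc 0 x₀,
      ∫⁻ w in Ioo 0 z, ENNReal.ofReal (π w) ≤ ENNReal.ofReal (C' * z * π z)) :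
    ∀ x ∈ Ioc 0 x₀,
      ∫⁻ z in Ioo 0 x,
        ENNReal.ofReal (π z / ∫ w in Ioo 0 z, (μ (Ioi (z - w))).toReal * π w) = ⊤ := by
  intro x hx
  have hμ_pos : μ (Ioi 0) ≠ 0 := measure_Ioi_ne_zero_of_measure_Iic_eq_zero hμne hμ
  have hπ_ae : ∀ z, 0 ≤ᵐ[volume.restrict (Ioo 0 z)] π := fun z => ae_of_all _ hπ_nonneg
  have hπ_int : ∀ z ∈ Ioc 0 x₀, IntegrableOn π (Ioo 0 z) := fun z hz =>
    (lintegral_ofReal_ne_top_iff_integrable hπ_meas.aestronglyMeasurable (hπ_ae z)).1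
      (ne_top_of_le_ne_top ENNReal.ofReal_ne_top (hbound z hz))
  have hπ_le : ∀ z ∈ Ioc 0 x₀, ∫ w in Ioo 0 z, π w ≤ C' * z * π z := fun z hz => by
    rw [integral_eq_lintegral_of_nonneg_ae (hπ_ae z) hπ_meas.aestronglyMeasurable]
    exact ENNReal.toReal_le_of_le_ofReal (mul_pos (mul_pos hC' hz.1) (hπ_pos z hz.1)).le
      (hbound z hz)
  have : NeZero μ := ⟨hμne⟩
  have hM : 0 < μ.real univ * C' := mul_pos measureReal_univ_pos hC'
  refine top_unique ((lintegral_Ioo_ofReal_div_eq_top (inv_pos.2 hM) hx.1).ge.trans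
    (setLIntegral_mono' measurableSet_Ioo fun z hz => ENNReal.ofReal_le_ofReal ?_))
  have hz : z ∈ Ioc 0 x₀ := ⟨hz.1, hz.2.le.trans hx.2⟩
  exact div_le_div_tailConv hμ_pos hπ_pos hz.1 (hπ_int z hz) hC' (hπ_le z hz)

/-- divergence of the drift-time integral `∫_0^x π/(μ̄ₛ*π)` near the origin
(equation (eq_subor) of the paper); the process cannot drift onto `0` in finite time. -/
theorem drift_time_integral_diverges
    (μ : Measure ℝ) [IsFiniteMeasure μ] (hμne : μ ≠ 0) (hμ : μ (Iic 0) = 0)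
    (π : ℝ → ℝ) (hπ_meas : Measurable π) (hπ_nonneg : ∀ x, 0 ≤ π x)
    (hπ_zero : ∀ x ≤ 0, π x = 0) (hπ_pos : ∀ z > (0 : ℝ), 0 < π z)
    (C' x₀ : ℝ) (hC' : 0 < C') (hx₀ : 0 < x₀)
    (hbound : ∀ z ∈ Ioc 0 x₀,
      ∫⁻ w in Ioo 0 z, ENNReal.ofReal (π w) ≤ ENNReal.ofReal (C' * z * π z)) :
    ∀ x ∈ Ioc 0 x₀,
      ∫⁻ z in Ioo 0 x,
        ENNReal.ofReal (π z / ∫ w in Ioo 0 z, (μ (Ioi (z - w))).toReal * π w) = ⊤ :=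
  drift_time_integral_diverges_general μ hμne hμ π hπ_meas hπ_nonneg hπ_pos C' x₀ hC' hbound
end

section
/- Let x₀ > 0 and let φ : (0,∞) → ℝ be continuous with φ(z) < 0 for all z > 0 and ∫_0^{x₀} 1/(−φ(z)) dz = +∞. Let T > 0 and let q : [0,T) → (0,∞) be differentiable with q'(t) = φ(q(t)) for all t ∈ [0,T). Then inf_{t ∈ [0,T)} q(t) > 0. -/
open MeasureTheory Set Filter

/-!
Along the solution, `dt = dq / φ(q)`, so by the change of variables `z = q(s)` the time spent
going from `q(0)` down to `q(t)` is `∫_{q(t)}^{q(0)} dz / (-φ z) = t < T`. If `q` came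
arbitrarily close to `0`, continuity from below would bound `∫_0^{q(0)} dz / (-φ z)` by `T`,
whereas this integral diverges, because the divergence of `∫_0^{x₀}` sits at `0`.
-/

theorem intervalIntegral_inv_comp_eq_sub {φ q : ℝ → ℝ} {a b : ℝ}
    (hq : ∀ t ∈ uIcc a b, HasDerivAt q (φ (q t)) t)
    (hφ : ContinuousOn φ (q '' uIcc a b)) (hφ₀ : ∀ t ∈ uIcc a b, φ (q t) ≠ 0) :
    ∫ z in q a..q b, (φ z)⁻¹ = b - a := by
  have hq_cont : ContinuousOn q (uIcc a b) := fun t ht =>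
    (hq t ht).continuousAt.continuousWithinAt
  rw [← intervalIntegral.integral_comp_mul_deriv' (g := fun z => (φ z)⁻¹) hq (hφ.comp hq_cont (mapsTo_image _ _))
    (hφ.inv₀ (by rintro _ ⟨t, ht, rfl⟩; exact hφ₀ t ht))]
  calc ∫ t in a..b, ((fun z => (φ z)⁻¹) ∘ q) t * (φ ∘ q) t = ∫ _ in a..b, (1 : ℝ) :=
        intervalIntegral.integral_congr fun t ht => inv_mul_cancel₀ (hφ₀ t ht)
    _ = b - a := by simp

theorem measure_Ioc_zero_eq_top {μ : Measure ℝ} {x₀ b : ℝ} (hdiv : μ (Ioo 0 x₀) = ⊤)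
    (hfin : μ (Icc b x₀) ≠ ⊤) : μ (Ioc 0 b) = ⊤ := by
  have hcover : Ioo 0 x₀ ⊆ Ioc 0 b ∪ Icc b x₀ := fun z ⟨hz₀, hzx⟩ =>
    (le_or_gt z b).imp (fun hzb => ⟨hz₀, hzb⟩) fun hbz => ⟨hbz.le, hzx.le⟩
  have h := (measure_mono hcover).trans (measure_union_le (μ := μ) _ _)
  rw [hdiv, top_le_iff, ENNReal.add_eq_top] at h
  exact h.resolve_right hfin

theorem measure_Ioc_zero_le_of_exists_small {μ : Measure ℝ} {b : ℝ} {C : ENNReal}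
    (h : ∀ ε > 0, ∃ y ∈ Ioo 0 ε, μ (Ioc y b) ≤ C) : μ (Ioc 0 b) ≤ C := by
  have hcover : Ioc 0 b ⊆ ⋃ n : ℕ, Ioc (1 / (n + 1 : ℝ)) b := by
    rintro z ⟨hz, hzb⟩
    obtain ⟨n, hn⟩ := exists_nat_one_div_lt hz
    exact mem_iUnion.2 ⟨n, hn, hzb⟩
  have hmono : Monotone fun n : ℕ => Ioc (1 / (n + 1 : ℝ)) b := fun m n hmn =>
    Ioc_subset_Ioc_left (Nat.one_div_le_one_div hmn)
  calc μ (Ioc 0 b) ≤ μ (⋃ n : ℕ, Ioc (1 / (n + 1 : ℝ)) b) := measure_mono hcover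
    _ = ⨆ n : ℕ, μ (Ioc (1 / (n + 1 : ℝ)) b) := hmono.measure_iUnion
    _ ≤ C := iSup_le fun n => by
      obtain ⟨y, hy, hyC⟩ := h _ Nat.one_div_pos_of_nat
      exact (measure_mono (Ioc_subset_Ioc_left hy.2.le)).trans hyC

section Solution

variable {φ q : ℝ → ℝ} {T : ℝ}

theorem continuousOn_one_div_neg_of_neg (hφ_cont : ContinuousOn φ (Ioi 0))
    (hφ_neg : ∀ z > (0 : ℝ), φ z < 0) : ContinuousOn (fun z => 1 / (-φ z)) (Ioi 0) :=
  continuousOn_const.div hφ_cont.neg fun z hz => (neg_pos.2 (hφ_neg z hz)).ne'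

theorem antitoneOn_of_hasDerivAt_neg_comp (hφ_neg : ∀ z > (0 : ℝ), φ z < 0)
    (hq_pos : ∀ t ∈ Ico 0 T, 0 < q t) (hq_deriv : ∀ t ∈ Ico 0 T, HasDerivAt q (φ (q t)) t) :
    AntitoneOn q (Ico 0 T) :=
  antitoneOn_of_hasDerivWithinAt_nonpos (convex_Ico 0 T)
    (fun t ht => (hq_deriv t ht).continuousAt.continuousWithinAt)
    (fun t ht => (hq_deriv t (interior_subset ht)).hasDerivWithinAt)
    fun t ht => (hφ_neg _ (hq_pos t (interior_subset ht))).le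

theorem setLIntegral_Ioc_one_div_neg_eq_time (hφ_cont : ContinuousOn φ (Ioi 0))
    (hφ_neg : ∀ z > (0 : ℝ), φ z < 0) (hq_pos : ∀ t ∈ Ico 0 T, 0 < q t)
    (hq_deriv : ∀ t ∈ Ico 0 T, HasDerivAt q (φ (q t)) t) {t : ℝ} (ht : t ∈ Ico 0 T) :
    ∫⁻ z in Ioc (q t) (q 0), ENNReal.ofReal (1 / (-φ z)) = ENNReal.ofReal t := by
  have h0 : (0 : ℝ) ∈ Ico 0 T := ⟨le_rfl, ht.1.trans_lt ht.2⟩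
  have hqt : q t ≤ q 0 := antitoneOn_of_hasDerivAt_neg_comp hφ_neg hq_pos hq_deriv h0 ht ht.1
  have hsub : uIcc 0 t ⊆ Ico 0 T := by
    rw [uIcc_of_le ht.1]
    exact Icc_subset_Ico_right ht.2
  have hpos : Icc (q t) (q 0) ⊆ Ioi 0 := fun z hz => (hq_pos t ht).trans_le hz.1
  have htime : ∫ z in q t..q 0, 1 / (-φ z) = t := by
    have h := intervalIntegral_inv_comp_eq_sub (fun s hs => hq_deriv s (hsub hs))
      (hφ_cont.mono (image_subset_iff.2 fun s hs => hq_pos s (hsub hs)))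
      fun s hs => (hφ_neg _ (hq_pos s (hsub hs))).ne
    rw [intervalIntegral.integral_symm]
    simp only [one_div, inv_neg, intervalIntegral.integral_neg, h]
    ring
  rw [← ofReal_integral_eq_lintegral_ofReal, ← intervalIntegral.integral_of_le hqt, htime]
  · exact ((continuousOn_one_div_neg_of_neg hφ_cont hφ_neg).mono hpos).integrableOn_compact
      isCompact_Icc |>.mono_set Ioc_subset_Icc_self
  · filter_upwards [ae_restrict_mem measurableSet_Ioc] with z hz
    exact one_div_nonneg.2 (neg_nonneg.2 (hφ_neg z (hpos (Ioc_subset_Icc_self hz))).le)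

end Solution

theorem ode_solution_bounded_away_from_zero_general
    (x₀ : ℝ)
    (φ : ℝ → ℝ) (hφ_cont : ContinuousOn φ (Ioi 0))
    (hφ_neg : ∀ z > (0 : ℝ), φ z < 0)
    (hdiv : ∫⁻ z in Ioo 0 x₀, ENNReal.ofReal (1 / (-φ z)) = ⊤)
    (T : ℝ) (hT : 0 < T)
    (q : ℝ → ℝ)
    (hq_pos : ∀ t ∈ Ico 0 T, 0 < q t)
    (hq_deriv : ∀ t ∈ Ico 0 T, HasDerivAt q (φ (q t)) t) :
    0 < sInf (q '' Ico 0 T) := by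
  set ν := volume.withDensity fun z => ENNReal.ofReal (1 / (-φ z))
  have hν : ∀ s, ν s = ∫⁻ z in s, ENNReal.ofReal (1 / (-φ z)) := withDensity_apply' _
  have h0 : (0 : ℝ) ∈ Ico 0 T := ⟨le_rfl, hT⟩
  have hν_top : ν (Ioc 0 (q 0)) = ⊤ := by
    refine measure_Ioc_zero_eq_top ((hν _).trans hdiv) ?_
    rw [hν]
    exact ((continuousOn_one_div_neg_of_neg hφ_cont hφ_neg).mono fun z hz =>
      (hq_pos 0 h0).trans_le hz.1).integrableOn_compact isCompact_Icc |>.setLIntegral_lt_top.ne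
  by_contra hinf
  have hsmall : ∀ ε > 0, ∃ y ∈ Ioo 0 ε, ν (Ioc y (q 0)) ≤ ENNReal.ofReal T := by
    intro ε hε
    obtain ⟨_, ⟨t, ht, rfl⟩, hlt⟩ :=
      exists_lt_of_csInf_lt ⟨_, mem_image_of_mem q h0⟩ ((not_lt.1 hinf).trans_lt hε)
    refine ⟨q t, ⟨hq_pos t ht, hlt⟩, ?_⟩
    rw [hν, setLIntegral_Ioc_one_div_neg_eq_time hφ_cont hφ_neg hq_pos hq_deriv ht]
    exact ENNReal.ofReal_le_ofReal ht.2.le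
  exact ENNReal.ofReal_ne_top (top_le_iff.1 (hν_top ▸ measure_Ioc_zero_le_of_exists_small hsmall))

/-- if `∫_0^{x₀} dz/(−φ(z)) = ∞`, a solution of `q' = φ(q)` with values
in `(0,∞)` stays bounded away from `0` on any finite time horizon. -/
theorem ode_solution_bounded_away_from_zero
    (x₀ : ℝ) (hx₀ : 0 < x₀)
    (φ : ℝ → ℝ) (hφ_cont : ContinuousOn φ (Ioi 0))
    (hφ_neg : ∀ z > (0 : ℝ), φ z < 0)
    (hdiv : ∫⁻ z in Ioo 0 x₀, ENNReal.ofReal (1 / (-φ z)) = ⊤)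
    (T : ℝ) (hT : 0 < T)
    (q : ℝ → ℝ)
    (hq_pos : ∀ t ∈ Ico 0 T, 0 < q t)
    (hq_deriv : ∀ t ∈ Ico 0 T, HasDerivAt q (φ (q t)) t) :
    0 < sInf (q '' Ico 0 T) :=
  ode_solution_bounded_away_from_zero_general x₀ φ hφ_cont hφ_neg hdiv T hT q hq_pos hq_deriv
end

section
/- Let α > 0, C > 0 and let π : ℝ → [0,∞) be measurable with π = 0 on (−∞,0] and lim_{x→∞} π(x)e^{αx} = C. Let μ be a finite Borel measure on ℝ with μ((−∞,0]) = 0. Then, in [0,∞], liminf_{x→∞} (1/π(x)) ∫_0^x μ((x−z,∞)) π(z) dz ≥ ∫_0^∞ μ((z,∞)) e^{αz} dz. -/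
/-!
Substituting `w = x - z` writes the ratio as `∫_{(0,x)} μ((w,∞)) π(x-w)/π(x) dw`. The tail
hypothesis on `π` gives `π(x-w)/π(x) → e^{αw}` for every fixed `w`, so the bound is Fatou's lemma.
-/

open MeasureTheory Set Filter Topology
open scoped ENNReal

theorem Filter.Tendsto.comp_sub_div_of_mul_exp {f : ℝ → ℝ} {α C : ℝ} (hC : C ≠ 0)
    (hf : Tendsto (fun x => f x * Real.exp (α * x)) atTop (𝓝 C)) (w : ℝ) :
    Tendsto (fun x => f (x - w) / f x) atTop (𝓝 (Real.exp (α * w))) := by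
  have hshift : Tendsto (fun x => f (x - w) * Real.exp (α * (x - w))) atTop (𝓝 C) :=
    hf.comp (tendsto_atTop_add_const_right _ (-w) tendsto_id)
  have hlim := (hshift.div hf hC).mul_const (Real.exp (α * w))
  rw [div_self hC, one_mul] at hlim
  refine hlim.congr fun x => ?_
  rw [Pi.div_apply, mul_sub, Real.exp_sub]
  field_simp

theorem Filter.Tendsto.ofReal_comp_sub_div_of_mul_exp {f : ℝ → ℝ} {α C : ℝ} (hC : 0 < C)
    (hf : Tendsto (fun x => f x * Real.exp (α * x)) atTop (𝓝 C)) (w : ℝ) :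
    Tendsto (fun x => ENNReal.ofReal (f (x - w)) / ENNReal.ofReal (f x)) atTop
      (𝓝 (ENNReal.ofReal (Real.exp (α * w)))) := by
  have hpos : ∀ᶠ x in atTop, 0 < f x := by
    filter_upwards [hf.eventually_const_lt hC] with x hx
    exact pos_of_mul_pos_left hx (Real.exp_pos _).le
  refine (ENNReal.tendsto_ofReal (hf.comp_sub_div_of_mul_exp hC.ne' w)).congr' ?_
  filter_upwards [hpos] with x hx
  exact ENNReal.ofReal_div_of_pos hx

theorem setLIntegral_Ioo_comp_const_sub (f : ℝ → ℝ≥0∞) (x a b : ℝ) :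
    ∫⁻ z in Ioo (x - b) (x - a), f (x - z) = ∫⁻ w in Ioo a b, f w := by
  rw [← preimage_const_sub_Ioo]
  exact (Measure.measurePreserving_sub_left volume x).setLIntegral_comp_preimage_emb
    (MeasurableEquiv.subLeft x).measurableEmbedding f _

theorem lintegral_le_liminf_lintegral_of_tendsto {α ι : Type*} [MeasurableSpace α]
    {μ : Measure α} {u : Filter ι} [IsCountablyGenerated u] {f : ι → α → ℝ≥0∞} {g : α → ℝ≥0∞}
    (hf : ∀ i, Measurable (f i)) (hlim : ∀ a, Tendsto (fun i => f i a) u (𝓝 (g a))) :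
    ∫⁻ a, g a ∂μ ≤ liminf (fun i => ∫⁻ a, f i a ∂μ) u := by
  rcases u.eq_or_neBot with rfl | hu
  · simp
  calc ∫⁻ a, g a ∂μ = ∫⁻ a, liminf (fun i => f i a) u ∂μ :=
        lintegral_congr fun a => (hlim a).liminf_eq.symm
    _ ≤ _ := lintegral_liminf_le hf

theorem measurable_measure_Ioi (μ : Measure ℝ) : Measurable fun w => μ (Ioi w) :=
  Antitone.measurable fun _ _ hvw => measure_mono (Ioi_subset_Ioi hvw)

theorem setLIntegral_tail_mul_div_eq_indicator (μ : Measure ℝ) {π : ℝ → ℝ} (hπ : Measurable π)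
    (x : ℝ) :
    (∫⁻ z in Ioo 0 x, μ (Ioi (x - z)) * ENNReal.ofReal (π z)) / ENNReal.ofReal (π x) =
      ∫⁻ w in Ioi 0, (Iio x).indicator
        (fun w => μ (Ioi w) * (ENNReal.ofReal (π (x - w)) / ENNReal.ofReal (π x))) w := by
  have hmeas : Measurable fun w => μ (Ioi w) * ENNReal.ofReal (π (x - w)) :=
    (measurable_measure_Ioi μ).mul (hπ.comp (measurable_const.sub measurable_id)).ennreal_ofReal
  have hsub := setLIntegral_Ioo_comp_const_sub
    (fun w => μ (Ioi w) * ENNReal.ofReal (π (x - w))) x 0 x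
  simp only [sub_self, sub_zero, sub_sub_cancel] at hsub
  simp_rw [div_eq_mul_inv, ← mul_assoc]
  rw [setLIntegral_indicator measurableSet_Iio, Iio_inter_Ioi, lintegral_mul_const _ hmeas, hsub]

theorem liminf_tail_convolution_ratio_ge_general
    (α C : ℝ) (hC : 0 < C)
    (π : ℝ → ℝ) (hπ_meas : Measurable π)
    (hlim : Tendsto (fun x => π x * Real.exp (α * x)) atTop (nhds C))
    (μ : Measure ℝ) :
    (∫⁻ z in Ioi 0, μ (Ioi z) * ENNReal.ofReal (Real.exp (α * z)))
      ≤ Filter.liminf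
          (fun x => (∫⁻ z in Ioo 0 x, μ (Ioi (x - z)) * ENNReal.ofReal (π z))
            / ENNReal.ofReal (π x)) atTop := by
  simp_rw [setLIntegral_tail_mul_div_eq_indicator μ hπ_meas]
  refine lintegral_le_liminf_lintegral_of_tendsto (fun x => ?_) fun w => ?_
  · exact ((measurable_measure_Ioi μ).mul
      ((hπ_meas.comp (measurable_const.sub measurable_id)).ennreal_ofReal.div_const _)).indicator
      measurableSet_Iio
  · refine (ENNReal.Tendsto.const_mul (hlim.ofReal_comp_sub_div_of_mul_exp hC w)
      (Or.inl (ENNReal.ofReal_pos.mpr (Real.exp_pos _)).ne')).congr' ?_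
    filter_upwards [eventually_gt_atTop w] with x hx
    rw [indicator_of_mem (mem_Iio.mpr hx)]

/-- asymptotic lower bound (in `[0,∞]`) for `(μ̄ₛ*π)(x)/π(x)` as `x → ∞`
under the exponential-tail assumption on `π`. -/
theorem liminf_tail_convolution_ratio_ge
    (α C : ℝ) (hα : 0 < α) (hC : 0 < C)
    (π : ℝ → ℝ) (hπ_meas : Measurable π) (hπ_nonneg : ∀ x, 0 ≤ π x)
    (hπ_zero : ∀ x ≤ 0, π x = 0)
    (hlim : Tendsto (fun x => π x * Real.exp (α * x)) atTop (nhds C))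
    (μ : Measure ℝ) [IsFiniteMeasure μ] (hμ : μ (Iic 0) = 0) :
    (∫⁻ z in Ioi 0, μ (Ioi z) * ENNReal.ofReal (Real.exp (α * z)))
      ≤ Filter.liminf
          (fun x => (∫⁻ z in Ioo 0 x, μ (Ioi (x - z)) * ENNReal.ofReal (π z))
            / ENNReal.ofReal (π x)) atTop :=
  liminf_tail_convolution_ratio_ge_general α C hC π hπ_meas hlim μ
end

section
/- Let α > 0, C > 0, n ≥ 1, and let π : ℝ → [0,∞) be measurable with π = 0 on (−∞,0] and lim_{x→∞} π(x)e^{αx} = C. Let μ be a finite Borel measure on ℝ with μ((−∞,0]) = 0 and μ([n,∞)) = 0. Then limsup_{x→∞} (1/π(x)) ∫_0^x μ((x−z,∞)) π(z) dz ≤ n μ(ℝ) e^{αn}; in particular this limsup is finite. -/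
/-!
Only `z ∈ (x - n, x)` contributes to the convolution, because `μ (x - z, ∞) = 0` for `z ≤ x - n`.
Since `π z e^{αz} → C > 0`, for any `r > 1` and all large `z, x` we have
`π z ≤ r e^{α (x - z)} π x ≤ r e^{α n} π x` on that window, so the ratio is eventually at most
`r · n μ(ℝ) e^{αn}`; then let `r ↓ 1`.
-/

open MeasureTheory Set Filter
open scoped ENNReal

noncomputable def tailConvolution (μ : Measure ℝ) (π : ℝ → ℝ) (x : ℝ) : ℝ≥0∞ :=
  ∫⁻ z in Ioo 0 x, μ (Ioi (x - z)) * ENNReal.ofReal (π z)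

lemma tailConvolution_le_of_le_on_Ioo {μ : Measure ℝ} {π : ℝ → ℝ} {a x M : ℝ}
    (hμa : μ (Ici a) = 0) (hπ : ∀ z ∈ Ioo (x - a) x, π z ≤ M) :
    tailConvolution μ π x ≤ ENNReal.ofReal a * μ univ * ENNReal.ofReal M := by
  have hpointwise : ∀ z ∈ Ioo 0 x, μ (Ioi (x - z)) * ENNReal.ofReal (π z)
      ≤ (Ioo (x - a) x).indicator (fun _ ↦ μ univ * ENNReal.ofReal M) z := by
    rintro z ⟨-, hzx⟩
    by_cases hza : x - a < z
    · rw [indicator_of_mem (show z ∈ Ioo (x - a) x from ⟨hza, hzx⟩)]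
      exact mul_le_mul' (measure_mono (subset_univ _))
        (ENNReal.ofReal_le_ofReal (hπ z ⟨hza, hzx⟩))
    · have hsub : Ioi (x - z) ⊆ Ici a := fun y (hy : x - z < y) ↦ show a ≤ y by linarith
      simp [measure_mono_null hsub hμa]
  calc tailConvolution μ π x
      ≤ ∫⁻ z in Ioo 0 x, (Ioo (x - a) x).indicator (fun _ ↦ μ univ * ENNReal.ofReal M) z :=
        setLIntegral_mono_ae (aemeasurable_const.indicator measurableSet_Ioo)
          (ae_of_all _ hpointwise)
    _ = μ univ * ENNReal.ofReal M * volume (Ioo (x - a) x ∩ Ioo 0 x) := by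
        rw [lintegral_indicator measurableSet_Ioo, setLIntegral_const,
          Measure.restrict_apply measurableSet_Ioo]
    _ ≤ μ univ * ENNReal.ofReal M * volume (Ioo (x - a) x) := by gcongr; exact inter_subset_left
    _ = ENNReal.ofReal a * μ univ * ENNReal.ofReal M := by
        rw [Real.volume_Ioo, sub_sub_cancel, mul_comm]; ring

lemma exists_le_mul_exp_of_tendsto_mul_exp {π : ℝ → ℝ} {α C r : ℝ} (hC : 0 < C) (hr : 1 < r)
    (hlim : Tendsto (fun x ↦ π x * Real.exp (α * x)) atTop (nhds C)) :
    ∃ X, ∀ z x, X ≤ z → X ≤ x → 0 < π x ∧ π z ≤ r * Real.exp (α * (x - z)) * π x := by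
  set g := fun x ↦ π x * Real.exp (α * x)
  have hratio : Tendsto (fun p : ℝ × ℝ ↦ g p.1 / g p.2) (atTop ×ˢ atTop) (nhds 1) := by
    rw [← div_self hC.ne']
    exact (hlim.comp tendsto_fst).div (hlim.comp tendsto_snd) hC.ne'
  have hev : ∀ᶠ p : ℝ × ℝ in atTop ×ˢ atTop, 0 < g p.2 ∧ g p.1 / g p.2 < r :=
    ((hlim.comp tendsto_snd).eventually (lt_mem_nhds hC)).and (hratio.eventually (gt_mem_nhds hr))
  rw [prod_atTop_atTop_eq] at hev
  obtain ⟨X, hX⟩ := eventually_atTop_prod_self.mp hev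
  refine ⟨X, fun z x hz hx ↦ ?_⟩
  obtain ⟨hgx, hgzx⟩ := hX z x hz hx
  have hπx : 0 < π x := pos_of_mul_pos_left hgx (Real.exp_pos _).le
  refine ⟨hπx, ?_⟩
  have hgz : g z ≤ r * g x := ((div_lt_iff₀ hgx).mp hgzx).le
  calc π z = g z * Real.exp (-(α * z)) := by simp [g, mul_assoc, ← Real.exp_add]
    _ ≤ r * g x * Real.exp (-(α * z)) := by gcongr
    _ = r * Real.exp (α * (x - z)) * π x := by
        rw [show α * (x - z) = α * x + -(α * z) by ring, Real.exp_add]; ring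

lemma eventually_tailConvolution_div_le {μ : Measure ℝ} {π : ℝ → ℝ} {α C a r : ℝ}
    (hα : 0 ≤ α) (hC : 0 < C) (hlim : Tendsto (fun x ↦ π x * Real.exp (α * x)) atTop (nhds C))
    (hμa : μ (Ici a) = 0) (hr : 1 < r) :
    ∀ᶠ x in atTop, tailConvolution μ π x / ENNReal.ofReal (π x)
      ≤ ENNReal.ofReal a * μ univ * ENNReal.ofReal (Real.exp (α * a)) * ENNReal.ofReal r := by
  obtain ⟨X, hX⟩ := exists_le_mul_exp_of_tendsto_mul_exp hC hr hlim
  filter_upwards [eventually_ge_atTop X, eventually_ge_atTop (X + a)] with x hxX hxa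
  have hπx : 0 < π x := (hX x x hxX hxX).1
  have hbound : ∀ z ∈ Ioo (x - a) x, π z ≤ r * Real.exp (α * a) * π x := by
    rintro z ⟨hza, hzx⟩
    refine (hX z x (by linarith) hxX).2.trans ?_
    gcongr
    linarith
  calc tailConvolution μ π x / ENNReal.ofReal (π x)
      ≤ ENNReal.ofReal a * μ univ * ENNReal.ofReal (r * Real.exp (α * a) * π x)
          / ENNReal.ofReal (π x) := by
        gcongr; exact tailConvolution_le_of_le_on_Ioo hμa hbound
    _ = ENNReal.ofReal a * μ univ * ENNReal.ofReal (Real.exp (α * a)) * ENNReal.ofReal r := by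
        rw [ENNReal.ofReal_mul (by positivity), ENNReal.ofReal_mul (by linarith), ← mul_assoc,
          ENNReal.mul_div_cancel_right (ENNReal.ofReal_pos.mpr hπx).ne' ENNReal.ofReal_ne_top]
        ring

theorem limsup_tail_convolution_ratio_le_general
    (α C : ℝ) (hα : 0 < α) (hC : 0 < C)
    (n : ℕ)
    (π : ℝ → ℝ)
    (hlim : Tendsto (fun x => π x * Real.exp (α * x)) atTop (nhds C))
    (μ : Measure ℝ)
    (hμn : μ (Ici (n : ℝ)) = 0) :
    Filter.limsup
        (fun x => (∫⁻ z in Ioo 0 x, μ (Ioi (x - z)) * ENNReal.ofReal (π z))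
          / ENNReal.ofReal (π x)) atTop
      ≤ (n : ℝ≥0∞) * μ univ * ENNReal.ofReal (Real.exp (α * n)) := by
  set A := (n : ℝ≥0∞) * μ univ * ENNReal.ofReal (Real.exp (α * n))
  have hA : Tendsto (fun r ↦ A * ENNReal.ofReal r) (nhdsWithin 1 (Ioi 1)) (nhds A) := by
    have h1 : ENNReal.ofReal 1 ≠ 0 := by simp
    simpa using ENNReal.Tendsto.const_mul
      (ENNReal.tendsto_ofReal (tendsto_nhdsWithin_of_tendsto_nhds tendsto_id)) (Or.inl h1)
  refine ge_of_tendsto hA (eventually_nhdsWithin_of_forall fun r (hr : 1 < r) ↦ ?_)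
  refine limsup_le_of_le (by isBoundedDefault) ?_
  have h := eventually_tailConvolution_div_le hα.le hC hlim hμn hr
  rwa [ENNReal.ofReal_natCast] at h

/-- if the jump measure has support bounded above by `n`, then the
ratio `(μ̄ₛ*π)(x)/π(x)` is asymptotically bounded by `n μ(ℝ) e^{αn}`. -/
theorem limsup_tail_convolution_ratio_le
    (α C : ℝ) (hα : 0 < α) (hC : 0 < C)
    (n : ℕ) (hn : 1 ≤ n)
    (π : ℝ → ℝ) (hπ_meas : Measurable π) (hπ_nonneg : ∀ x, 0 ≤ π x)
    (hπ_zero : ∀ x ≤ 0, π x = 0)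
    (hlim : Tendsto (fun x => π x * Real.exp (α * x)) atTop (nhds C))
    (μ : Measure ℝ) [IsFiniteMeasure μ] (hμ : μ (Iic 0) = 0)
    (hμn : μ (Ici (n : ℝ)) = 0) :
    Filter.limsup
        (fun x => (∫⁻ z in Ioo 0 x, μ (Ioi (x - z)) * ENNReal.ofReal (π z))
          / ENNReal.ofReal (π x)) atTop
      ≤ (n : ℝ≥0∞) * μ univ * ENNReal.ofReal (Real.exp (α * n)) :=
  limsup_tail_convolution_ratio_le_general α C hα hC n π hlim μ hμn
end

section
/- Let π : (0,∞) → [0,∞) be measurable and locally Lebesgue-integrable with π(z) > 0 for almost every z > 0, and set F(x) := ∫_0^x π(z) dz, assumed finite for all x > 0 (so F(x) > 0 for x > 0). Let 0 < a < b and let H : [a,b] → ℝ be a function such that z ↦ π(z)H(z)/F(z) is Lebesgue-integrable on [a,b] and H(x) = H(a) + ∫_a^x π(z) H(z)/F(z) dz for all x ∈ [a,b]. Then H(x) = (H(a)/F(a)) · F(x) for all x ∈ [a,b]. -/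
open MeasureTheory Set Filter

/-- any Carathéodory solution of the linear integral equation
`H(x) = H(a) + ∫_a^x π H/F` is a scalar multiple of the cumulative distribution
function `F(x) = ∫_0^x π` (equation (eq_4) of the paper). -/
theorem solution_of_linear_ode_is_multiple_of_cdf
    (π : ℝ → ℝ) (hπ_meas : Measurable π) (hπ_nonneg : ∀ z > (0 : ℝ), 0 ≤ π z)
    (hπ_pos : ∀ᵐ z ∂(volume.restrict (Ioi 0)), 0 < π z)
    (hπ_loc : ∀ x > (0 : ℝ), IntegrableOn π (Ioo 0 x))
    (F : ℝ → ℝ) (hF : ∀ x, F x = ∫ z in Ioo 0 x, π z)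
    (hF_pos : ∀ x > (0 : ℝ), 0 < F x)
    (a b : ℝ) (ha : 0 < a) (hab : a < b)
    (H : ℝ → ℝ)
    (hint : IntegrableOn (fun z => π z * H z / F z) (Icc a b))
    (heq : ∀ x ∈ Icc a b, H x = H a + ∫ z in a..x, π z * H z / F z) :
    ∀ x ∈ Icc a b, H x = (H a / F a) * F x := by
  have hFa : 0 < F a := hF_pos a ha
  set c : ℝ := H a / F a with hc
  set D : ℝ → ℝ := fun x => H x - c * F x with hD
  have hca : c * F a = H a := div_mul_cancel₀ _ hFa.ne'
  have hDa : D a = 0 := by simp [hD, hca]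
  -- a.e. nonnegativity on subsets of (0,∞)
  have hπ_ae : ∀ s : Set ℝ, MeasurableSet s → s ⊆ Ioi 0 →
      0 ≤ᵐ[volume.restrict s] π := by
    intro s hs hsub
    filter_upwards [ae_restrict_mem hs] with z hz
    exact hπ_nonneg z (hsub hz)
  -- monotonicity of F
  have hFmono : ∀ z, a ≤ z → F a ≤ F z := by
    intro z hz
    rw [hF a, hF z]
    refine setIntegral_mono_set (hπ_loc z (lt_of_lt_of_le ha hz))
      (hπ_ae _ measurableSet_Ioo fun x hx => hx.1)
      (HasSubset.Subset.eventuallyLE (Ioo_subset_Ioo le_rfl hz))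
  have hπ_int : IntegrableOn π (Icc a b) :=
    (hπ_loc (b + 1) (by linarith)).mono_set
      (fun z hz => ⟨ha.trans_le hz.1, by have := hz.2; simp only [mem_Icc] at *; linarith⟩)
  -- F as a primitive from a
  have hFsub : ∀ x ∈ Icc a b, F x = F a + ∫ z in a..x, π z := by
    intro x hx
    have hax : a ≤ x := hx.1
    rw [hF x, hF a, intervalIntegral.integral_of_le hax,
      ← Ioo_union_Ico_eq_Ioo ha hax,
      setIntegral_union (by rw [Set.disjoint_left]; rintro z hz1 hz2; exact absurd hz2.1 (not_le.mpr hz1.2)) measurableSet_Ico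
        (hπ_loc a ha)
        ((hπ_int.mono_set (Ico_subset_Icc_self.trans (Icc_subset_Icc le_rfl hx.2))))]
    rw [integral_Ico_eq_integral_Ioo, integral_Ioc_eq_integral_Ioo]
  -- pointwise identity for the integrand
  have hgcongr : ∀ z ∈ Icc a b, π z * D z / F z = π z * H z / F z - c * π z := by
    intro z hz
    have hFz : F z ≠ 0 := (hF_pos z (ha.trans_le hz.1)).ne'
    field_simp [hD]
    ring
  have hDint : IntegrableOn (fun z => π z * D z / F z) (Icc a b) := by
    refine IntegrableOn.congr_fun (hint.sub (hπ_int.const_mul c))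
      (fun z hz => (hgcongr z hz).symm) measurableSet_Icc
  -- interval integrability helper
  have hII : ∀ (f : ℝ → ℝ), IntegrableOn f (Icc a b) → ∀ x y, a ≤ x → x ≤ y → y ≤ b →
      IntervalIntegrable f volume x y := by
    intro f hf x y hax hxy hyb
    rw [intervalIntegrable_iff_integrableOn_Icc_of_le hxy]
    exact hf.mono_set (Icc_subset_Icc hax hyb)
  -- D satisfies the homogeneous integral equation
  have hDeq : ∀ x ∈ Icc a b, D x = ∫ z in a..x, π z * D z / F z := by
    intro x hx
    have h1 : ∫ z in a..x, π z * D z / F z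
        = (∫ z in a..x, π z * H z / F z) - c * ∫ z in a..x, π z := by
      rw [← intervalIntegral.integral_const_mul,
        ← intervalIntegral.integral_sub (hII _ hint a x le_rfl hx.1 hx.2)
          ((hII _ hπ_int a x le_rfl hx.1 hx.2).const_mul c)]
      apply intervalIntegral.integral_congr
      intro z hz
      rw [uIcc_of_le hx.1] at hz
      exact hgcongr z ⟨hz.1, hz.2.trans hx.2⟩
    rw [h1]
    have h2 := heq x hx
    have h3 := hFsub x hx
    simp only [hD]
    rw [h2, h3]
    linear_combination -hca
  -- continuity of D on [a,b]
  have hcont : ContinuousOn D (Icc a b) := by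
    have h := intervalIntegral.continuousOn_primitive_interval
      (f := fun z => π z * D z / F z) (a := a) (b := b)
      (by rw [uIcc_of_le hab.le]; exact hDint)
    rw [uIcc_of_le hab.le] at h
    exact h.congr hDeq
  -- the set where D vanishes from a
  set A : Set ℝ := {x | x ∈ Icc a b ∧ ∀ y ∈ Icc a x, D y = 0} with hA
  have haA : a ∈ A := ⟨⟨le_rfl, hab.le⟩, fun y hy => by
    have : y = a := le_antisymm hy.2 hy.1
    rw [this]; exact hDa⟩
  have hbdd : BddAbove A := ⟨b, fun x hx => hx.1.2⟩
  set t : ℝ := sSup A with ht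
  have hta : a ≤ t := le_csSup hbdd haA
  have htb : t ≤ b := csSup_le ⟨a, haA⟩ (fun x hx => hx.1.2)
  have hlt : ∀ y, a ≤ y → y < t → D y = 0 := by
    intro y hay hyt
    obtain ⟨x, hxA, hyx⟩ := exists_lt_of_lt_csSup ⟨a, haA⟩ hyt
    exact hxA.2 y ⟨hay, hyx.le⟩
  have htD : D t = 0 := by
    rw [hDeq t ⟨hta, htb⟩, intervalIntegral.integral_of_le hta,
      integral_Ioc_eq_integral_Ioo]
    refine setIntegral_eq_zero_of_forall_eq_zero (fun z hz => ?_)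
    rw [hlt z hz.1.le hz.2]
    simp
  have htA : t ∈ A := ⟨⟨hta, htb⟩, fun y hy => by
    rcases hy.2.eq_or_lt with h | h
    · rw [h]; exact htD
    · exact hlt y hy.1 h⟩
  -- t = b by the local contraction argument
  have htb' : t = b := by
    by_contra hne
    have htlt : t < b := lt_of_le_of_ne htb hne
    have hπint_tb : IntegrableOn π (Icc t b) := hπ_int.mono_set (Icc_subset_Icc hta le_rfl)
    have hKcont : ContinuousOn (fun y => ∫ z in Ioc t y, π z) (Icc t b) :=
      intervalIntegral.continuousOn_primitive hπint_tb
    have hcw : ContinuousWithinAt (fun y => ∫ z in Ioc t y, π z) (Icc t b) t :=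
      hKcont t ⟨le_rfl, htlt.le⟩
    obtain ⟨δ, hδ, hδ'⟩ := Metric.continuousWithinAt_iff.mp hcw (F a / 2) (by positivity)
    set x1 : ℝ := min (t + δ / 2) b with hx1
    have htx1 : t < x1 := lt_min (by linarith) htlt
    have hx1b : x1 ≤ b := min_le_right _ _
    have hax1 : a ≤ x1 := hta.trans htx1.le
    have hdist : dist x1 t < δ := by
      rw [Real.dist_eq, abs_of_nonneg (by linarith)]
      have h2 : x1 ≤ t + δ / 2 := min_le_left _ _
      linarith
    have hKsmall : ∫ z in Ioc t x1, π z < F a / 2 := by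
      have h2 := hδ' ⟨htx1.le, hx1b⟩ hdist
      rw [Real.dist_eq] at h2
      simp only [Ioc_self, Measure.restrict_empty, integral_zero_measure, sub_zero] at h2
      calc ∫ z in Ioc t x1, π z ≤ |∫ z in Ioc t x1, π z| := le_abs_self _
        _ < F a / 2 := h2
    -- maximum of |D| on [t, x1]
    have hJsub : Icc t x1 ⊆ Icc a b := Icc_subset_Icc hta hx1b
    obtain ⟨x0, hx0J, hx0max⟩ := isCompact_Icc.exists_isMaxOn
      (nonempty_Icc.mpr htx1.le) ((hcont.mono hJsub).abs)
    set m : ℝ := |D x0| with hm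
    have hm0 : 0 ≤ m := abs_nonneg _
    have hx0ab : x0 ∈ Icc a b := hJsub hx0J
    have hDx0 : D x0 = ∫ z in t..x0, π z * D z / F z := by
      have h1 := hDeq x0 hx0ab
      rw [← intervalIntegral.integral_add_adjacent_intervals
        (hII _ hDint a t le_rfl hta htb)
        (hII _ hDint t x0 hta hx0J.1 hx0ab.2)] at h1
      rw [h1, ← hDeq t ⟨hta, htb⟩, htD, zero_add]
    -- pointwise bound on [t, x0]
    have hptwise : ∀ z ∈ Icc t x0, |π z * D z / F z| ≤ m / F a * π z := by
      intro z hz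
      have hzab : z ∈ Icc a b := ⟨hta.trans hz.1, hz.2.trans hx0ab.2⟩
      have hz0 : 0 < z := ha.trans_le hzab.1
      have hπz : 0 ≤ π z := hπ_nonneg z hz0
      have hFz : 0 < F z := hF_pos z hz0
      have hDz : |D z| ≤ m := hx0max ⟨hz.1, hz.2.trans hx0J.2⟩
      have h1 : |D z| / F z ≤ m / F a := div_le_div₀ hm0 hDz hFa (hFmono z hzab.1)
      calc |π z * D z / F z| = π z * (|D z| / F z) := by
            rw [abs_div, abs_mul, abs_of_nonneg hπz, abs_of_nonneg hFz.le, mul_div_assoc]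
        _ ≤ π z * (m / F a) := mul_le_mul_of_nonneg_left h1 hπz
        _ = m / F a * π z := by ring
    have habs_int : IntervalIntegrable (fun z => |π z * D z / F z|) volume t x0 :=
      (hII _ hDint t x0 hta hx0J.1 hx0ab.2).abs
    have hbound_int : IntervalIntegrable (fun z => m / F a * π z) volume t x0 :=
      (hII _ hπ_int t x0 hta hx0J.1 hx0ab.2).const_mul _
    have key : m ≤ m / F a * ∫ z in Ioc t x1, π z := by
      calc m = |D x0| := rfl
        _ = |∫ z in t..x0, π z * D z / F z| := by rw [hDx0]
        _ ≤ ∫ z in t..x0, |π z * D z / F z| :=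
            intervalIntegral.abs_integral_le_integral_abs hx0J.1
        _ ≤ ∫ z in t..x0, m / F a * π z := by
            refine intervalIntegral.integral_mono_on hx0J.1 habs_int hbound_int hptwise
        _ = m / F a * ∫ z in t..x0, π z := intervalIntegral.integral_const_mul _ _
        _ ≤ m / F a * ∫ z in Ioc t x1, π z := by
            refine mul_le_mul_of_nonneg_left ?_ (by positivity)
            rw [intervalIntegral.integral_of_le hx0J.1]
            refine setIntegral_mono_set (hπ_int.mono_set ?_)
              (hπ_ae _ measurableSet_Ioc fun z hz => ha.trans_le (hta.trans hz.1.le))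
              (HasSubset.Subset.eventuallyLE (Ioc_subset_Ioc le_rfl hx0J.2))
            exact fun z hz => ⟨hta.trans hz.1.le, hz.2.trans hx1b⟩
    have hhalf : m ≤ m / 2 := by
      calc m ≤ m / F a * ∫ z in Ioc t x1, π z := key
        _ ≤ m / F a * (F a / 2) := mul_le_mul_of_nonneg_left hKsmall.le (by positivity)
        _ = m / 2 := by field_simp
    have hmz : m = 0 := le_antisymm (by linarith) hm0
    have hx1A : x1 ∈ A := by
      refine ⟨⟨hax1, hx1b⟩, fun y hy => ?_⟩
      rcases le_or_gt y t with h | h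
      · exact htA.2 y ⟨hy.1, h⟩
      · have h2 : |D y| ≤ m := hx0max ⟨h.le, hy.2⟩
        rw [hmz] at h2
        exact abs_nonpos_iff.mp h2
    exact absurd (le_csSup hbdd hx1A) (not_le.mpr htx1)
  intro x hx
  have hDx : D x = 0 := htA.2 x (htb' ▸ hx)
  have : H x - c * F x = 0 := hDx
  linarith
end

section
/- Let T > 0, λ ≥ 0, and let q : [0,T] → ℝ be continuously differentiable with q'(t) < 0 for all t ∈ [0,T]. Set S := sup_{t ∈ [0,T]} |q'(t)| (which is finite and positive). Then for every Borel set B ⊆ ℝ, ∫_0^T 1_B(q(t)) e^{−λ t} dt ≥ (e^{−λ T}/S) · Leb( B ∩ [q(T), q(0)] ), where Leb denotes Lebesgue measure. -/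
open MeasureTheory Set Filter

/-!
Because `q` is decreasing, the substitution `u = q t` turns `Leb (B ∩ [q T, q 0])` into
`∫₀ᵀ |q' t| 1_B (q t) dt`. On `[0, T]` the weight `|q' t| / S` is at most `1` and
`e^{-λT} ≤ e^{-λt}`, so the two integrands compare pointwise.
-/
theorem measureReal_inter_Icc_eq_integral_neg_deriv_mul_indicator {f f' : ℝ → ℝ} {a b : ℝ}
    {B : Set ℝ} (hab : a ≤ b) (hf : ContinuousOn f (Icc a b))
    (hff' : ∀ x ∈ Ioo a b, HasDerivAt f (f' x) x) (hf' : ∀ x ∈ Ioo a b, f' x ≤ 0)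
    (hB : MeasurableSet B) :
    volume.real (B ∩ Icc (f b) (f a)) =
      ∫ x in Icc a b, -f' x * B.indicator (fun _ => (1 : ℝ)) (f x) := by
  have h := integral_Icc_deriv_smul_of_deriv_nonpos
    (g := B.indicator fun _ => (1 : ℝ)) hf hff' hf' hab
  simp only [smul_eq_mul] at h
  simp only [neg_mul, integral_neg, h, neg_neg]
  rw [integral_indicator_const 1 hB, measureReal_restrict_apply hB, smul_eq_mul, mul_one]

theorem integrableOn_indicator_comp_mul_exp_neg_mul {q : ℝ → ℝ} {B : Set ℝ} {lam a b : ℝ}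
    (hq : ContinuousOn q (Ioo a b)) (hB : MeasurableSet B) :
    IntegrableOn (fun t => B.indicator (fun _ => (1 : ℝ)) (q t) * Real.exp (-lam * t))
      (Ioo a b) := by
  have hexp : Continuous fun t => Real.exp (-lam * t) := by fun_prop
  refine (hexp.integrableOn_Icc.mono_set Ioo_subset_Icc_self).mono' ?_ (ae_of_all _ fun t => ?_)
  · exact ((measurable_const.indicator hB).comp_aemeasurable
      (hq.aemeasurable measurableSet_Ioo)).aestronglyMeasurable.mul hexp.aestronglyMeasurable
  · have h₀ : 0 ≤ B.indicator (fun _ => (1 : ℝ)) (q t) :=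
      indicator_nonneg (fun _ _ => zero_le_one) _
    have h₁ : B.indicator (fun _ => (1 : ℝ)) (q t) ≤ 1 :=
      indicator_apply_le' (fun _ => le_rfl) (fun _ => zero_le_one)
    rw [Real.norm_eq_abs, abs_of_nonneg (mul_nonneg h₀ (Real.exp_pos _).le)]
    exact mul_le_of_le_one_left (Real.exp_pos _).le h₁

theorem exp_neg_mul_div_mul_le_exp_neg_mul {lam s t S x : ℝ} (hlam : 0 ≤ lam) (hst : s ≤ t)
    (hx : 0 ≤ x) (hxS : x ≤ S) :
    Real.exp (-lam * t) / S * x ≤ Real.exp (-lam * s) :=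
  calc Real.exp (-lam * t) / S * x = Real.exp (-lam * t) * (x / S) := by ring
    _ ≤ Real.exp (-lam * t) * 1 := by
        gcongr; exact div_le_one_of_le₀ hxS (hx.trans hxS)
    _ ≤ Real.exp (-lam * s) := by
        rw [mul_one, Real.exp_le_exp]; nlinarith

theorem occupation_lower_bound_of_deriv_nonpos {q q' : ℝ → ℝ} {T lam S : ℝ} {B : Set ℝ}
    (hT : 0 ≤ T) (hlam : 0 ≤ lam) (hq : ContinuousOn q (Icc 0 T))
    (hqq' : ∀ t ∈ Ioo 0 T, HasDerivAt q (q' t) t) (hq' : ∀ t ∈ Ioo 0 T, q' t ≤ 0)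
    (hS : ∀ t ∈ Ioo 0 T, |q' t| ≤ S) (hB : MeasurableSet B) :
    Real.exp (-lam * T) / S * volume.real (B ∩ Icc (q T) (q 0))
      ≤ ∫ t in (0 : ℝ)..T, B.indicator (fun _ => (1 : ℝ)) (q t) * Real.exp (-lam * t) := by
  rw [measureReal_inter_Icc_eq_integral_neg_deriv_mul_indicator hT hq hqq' hq' hB,
    ← integral_const_mul, intervalIntegral.integral_of_le hT, integral_Icc_eq_integral_Ioo,
    integral_Ioc_eq_integral_Ioo]
  have hind (x : ℝ) : 0 ≤ B.indicator (fun _ => (1 : ℝ)) x :=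
    indicator_nonneg (fun _ _ => zero_le_one) x
  refine integral_mono_of_nonneg ?_
    (integrableOn_indicator_comp_mul_exp_neg_mul (hq.mono Ioo_subset_Icc_self) hB) ?_
  · filter_upwards [ae_restrict_mem measurableSet_Ioo] with t ht
    have hq'_nonneg := neg_nonneg.2 (hq' t ht)
    have hS₀ : 0 ≤ S := (abs_nonneg _).trans (hS t ht)
    have := hind (q t)
    positivity
  · filter_upwards [ae_restrict_mem measurableSet_Ioo] with t ht
    have hweight := exp_neg_mul_div_mul_le_exp_neg_mul hlam ht.2.le (neg_nonneg.2 (hq' t ht))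
      ((neg_le_abs _).trans (hS t ht))
    calc _ = Real.exp (-lam * T) / S * -q' t * B.indicator (fun _ => (1 : ℝ)) (q t) := by ring
      _ ≤ Real.exp (-lam * t) * B.indicator (fun _ => (1 : ℝ)) (q t) :=
        mul_le_mul_of_nonneg_right hweight (hind _)
      _ = _ := mul_comm _ _

/-- the change-of-variables inequality from the petite-set lemma
(Lemma 4.2): occupation of a Borel set `B` by a strictly decreasing drift path,
weighted by `e^{−λt}`, is bounded below by a multiple of `Leb(B ∩ [q(T), q(0)])`. -/
theorem occupation_time_lower_bound
    (T lam : ℝ) (hT : 0 < T) (hlam : 0 ≤ lam)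
    (q q' : ℝ → ℝ)
    (hq_deriv : ∀ t ∈ Icc 0 T, HasDerivAt q (q' t) t)
    (hq'_cont : ContinuousOn q' (Icc 0 T))
    (hq'_neg : ∀ t ∈ Icc 0 T, q' t < 0)
    (B : Set ℝ) (hB : MeasurableSet B) :
    (Real.exp (-lam * T) / sSup ((fun t => |q' t|) '' Icc 0 T))
        * (volume (B ∩ Icc (q T) (q 0))).toReal
      ≤ ∫ t in (0 : ℝ)..T, B.indicator (fun _ => (1 : ℝ)) (q t) * Real.exp (-lam * t) := by
  have hbdd : BddAbove ((fun t => |q' t|) '' Icc 0 T) :=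
    isCompact_Icc.bddAbove_image hq'_cont.abs
  exact occupation_lower_bound_of_deriv_nonpos hT.le hlam
    (fun t ht => (hq_deriv t ht).continuousAt.continuousWithinAt)
    (fun t ht => hq_deriv t (Ioo_subset_Icc_self ht))
    (fun t ht => (hq'_neg t (Ioo_subset_Icc_self ht)).le)
    (fun t ht => le_csSup hbdd (mem_image_of_mem _ (Ioo_subset_Icc_self ht))) hB
end
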